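/- arXiv:2512.19050 — 6 statements merged into one kernel-verified Lean document; each statement's English description precedes it below -/
import Mathlib

section
/- Let n ≥ 1 and let a₁, …, a₄ₙ be real numbers. If for every 2n-element subset {i₁,…,i₂ₙ} ⊆ {1,…,4n} the elementary symmetric polynomial sₙ(a_{i₁},…,a_{i₂ₙ}) = 0, then at least 3n + 1 of the aᵢ vanish (equivalently, at most n − 1 are nonzero). -/
open Finset

private lemma esymm_insert {α : Type*} [DecidableEq α] (a : α → ℝ) (i : α)
    (J : Finset α) (hi : i ∉ J) (m : ℕ) :
    ∑ C ∈ (insert i J).powersetCard (m + 1), ∏ x ∈ C, a x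
      = (∑ C ∈ J.powersetCard (m + 1), ∏ x ∈ C, a x)
        + a i * ∑ C ∈ J.powersetCard m, ∏ x ∈ C, a x := by
  rw [Finset.powersetCard_succ_insert hi, Finset.sum_union, Finset.sum_image]
  · congr 1
    rw [Finset.mul_sum]
    refine Finset.sum_congr rfl fun C hC => ?_
    have hiC : i ∉ C := fun h => hi ((Finset.mem_powersetCard.mp hC).1 h)
    rw [Finset.prod_insert hiC]
  · intro C hC D hD hCD
    have hiC : i ∉ C := fun h => hi ((Finset.mem_powersetCard.mp hC).1 h)
    have hiD : i ∉ D := fun h => hi ((Finset.mem_powersetCard.mp hD).1 h)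
    have := congrArg (fun s => Finset.erase s i) hCD
    simpa [Finset.erase_insert hiC, Finset.erase_insert hiD] using this
  · rw [Finset.disjoint_right]
    intro C hC hC'
    obtain ⟨D, hD, rfl⟩ := Finset.mem_image.mp hC
    have : i ∈ insert i D := Finset.mem_insert_self i D
    exact (fun h => (h : i ∉ insert i D) this) fun h =>
      hi ((Finset.mem_powersetCard.mp hC').1 h)

private lemma descent (m : ℕ) : ∀ (n k : ℕ) (a : Fin (4 * n) → ℝ),
    (Finset.univ.filter (fun i => a i = 0)).card + 1 ≤ n →
    k + m = n → ∀ R : Finset (Fin (4 * n)), R.card ≤ 2 * k →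
    (∀ J : Finset (Fin (4 * n)), Disjoint J R → J.card = k + 2 * m →
      ∑ C ∈ J.powersetCard m, ∏ i ∈ C, a i = 0) → False := by
  induction m with
  | zero =>
    intro n k a hz hk R hR hsum
    have hcard : k ≤ Rᶜ.card := by
      rw [Finset.card_compl]
      simp only [Fintype.card_fin]
      omega
    obtain ⟨J, hJsub, hJcard⟩ := Finset.exists_subset_card_eq hcard
    have hdisj : Disjoint J R := by
      rw [Finset.disjoint_right]
      intro x hx hxJ
      exact (Finset.mem_compl.mp (hJsub hxJ)) hx
    have := hsum J hdisj (by omega)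
    simp [Finset.powersetCard_zero] at this
  | succ m ih =>
    intro n k a hz hk R hR hsum
    -- the complement of R
    have hVcard : Rᶜ.card = 4 * n - R.card := by
      rw [Finset.card_compl]; simp
    by_cases hconst : ∀ x ∈ Rᶜ, ∀ y ∈ Rᶜ, a x = a y
    · -- all values on Rᶜ are equal to some nonzero c
      have hnotsub : ¬ (Rᶜ ⊆ Finset.univ.filter (fun i => a i = 0)) := by
        intro hsub
        have := Finset.card_le_card hsub
        omega
      obtain ⟨i, hiV, hiz⟩ := Finset.not_subset.mp hnotsub
      have hai : a i ≠ 0 := by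
        intro h; exact hiz (Finset.mem_filter.mpr ⟨Finset.mem_univ i, h⟩)
      have hcard : k + 2 * (m + 1) ≤ Rᶜ.card := by omega
      obtain ⟨J, hJsub, hJcard⟩ := Finset.exists_subset_card_eq hcard
      have hdisj : Disjoint J R := by
        rw [Finset.disjoint_right]
        intro x hx hxJ
        exact (Finset.mem_compl.mp (hJsub hxJ)) hx
      have h0 := hsum J hdisj hJcard
      have hval : ∀ C ∈ J.powersetCard (m + 1), ∏ x ∈ C, a x = (a i) ^ (m + 1) := by
        intro C hC
        obtain ⟨hCJ, hCcard⟩ := Finset.mem_powersetCard.mp hC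
        calc ∏ x ∈ C, a x = ∏ _x ∈ C, a i :=
              Finset.prod_congr rfl fun x hx => hconst x (hJsub (hCJ hx)) i hiV
          _ = (a i) ^ (m + 1) := by rw [Finset.prod_const, hCcard]
      rw [Finset.sum_congr rfl hval, Finset.sum_const] at h0
      have hpos : 0 < (J.powersetCard (m + 1)).card := by
        rw [Finset.card_powersetCard, hJcard]
        exact Nat.choose_pos (by omega)
      have : ((J.powersetCard (m + 1)).card : ℝ) * (a i) ^ (m + 1) = 0 := by
        rw [← nsmul_eq_mul]; exact h0
      rcases mul_eq_zero.mp this with h | h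
      · exact absurd h (by positivity)
      · exact pow_ne_zero _ hai h
    · -- two distinct values on Rᶜ
      push_neg at hconst
      obtain ⟨i, hiV, j, hjV, hij⟩ := hconst
      have hine : i ≠ j := fun h => hij (h ▸ rfl)
      refine ih n (k + 1) a hz (by omega) (insert i (insert j R)) ?_ ?_
      · calc (insert i (insert j R)).card ≤ (insert j R).card + 1 :=
              Finset.card_insert_le _ _
          _ ≤ R.card + 1 + 1 := by
              have := Finset.card_insert_le j R; omega
          _ ≤ 2 * (k + 1) := by omega
      · intro J hdisj hJcard
        have hdisjR : Disjoint J R := hdisj.mono_right (by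
          intro x hx
          exact Finset.mem_insert_of_mem (Finset.mem_insert_of_mem hx))
        have hiJ : i ∉ J := fun h =>
          Finset.disjoint_left.mp hdisj h (Finset.mem_insert_self i _)
        have hjJ : j ∉ J := fun h =>
          Finset.disjoint_left.mp hdisj h
            (Finset.mem_insert_of_mem (Finset.mem_insert_self j R))
        have hiR : i ∉ R := Finset.mem_compl.mp hiV
        have hjR : j ∉ R := Finset.mem_compl.mp hjV
        have hIi : Disjoint (insert i J) R := by
          rw [Finset.disjoint_left]
          intro x hx
          rcases Finset.mem_insert.mp hx with rfl | hx
          · exact hiR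
          · exact Finset.disjoint_left.mp hdisjR hx
        have hIj : Disjoint (insert j J) R := by
          rw [Finset.disjoint_left]
          intro x hx
          rcases Finset.mem_insert.mp hx with rfl | hx
          · exact hjR
          · exact Finset.disjoint_left.mp hdisjR hx
        have hci : (insert i J).card = k + 2 * (m + 1) := by
          rw [Finset.card_insert_of_notMem hiJ]; omega
        have hcj : (insert j J).card = k + 2 * (m + 1) := by
          rw [Finset.card_insert_of_notMem hjJ]; omega
        have Ei := hsum (insert i J) hIi hci
        have Ej := hsum (insert j J) hIj hcj
        rw [esymm_insert a i J hiJ m] at Ei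
        rw [esymm_insert a j J hjJ m] at Ej
        have hfac : (a i - a j) * ∑ C ∈ J.powersetCard m, ∏ x ∈ C, a x = 0 := by
          ring_nf
          nlinarith [Ei, Ej]
        rcases mul_eq_zero.mp hfac with h | h
        · exact absurd (sub_eq_zero.mp h) hij
        · exact h

/-- If for every 2n-element subset I of {1,…,4n} the elementary
symmetric polynomial of degree n in the aᵢ, i ∈ I, vanishes, then at least 3n + 1
of the aᵢ are zero. -/
theorem stmt_5 (n : ℕ) (hn : 1 ≤ n) (a : Fin (4 * n) → ℝ)
    (h : ∀ I : Finset (Fin (4 * n)), I.card = 2 * n →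
      ∑ C ∈ I.powersetCard n, ∏ i ∈ C, a i = 0) :
    3 * n + 1 ≤ (Finset.univ.filter (fun i => a i = 0)).card := by
  by_contra hcon
  push_neg at hcon
  set Z := Finset.univ.filter (fun i => a i = 0) with hZ
  by_cases hzn : n ≤ Z.card
  · -- there are at least n zeros and at least n nonzeros
    have hTcard : n ≤ Zᶜ.card := by
      rw [Finset.card_compl]
      simp only [Fintype.card_fin]
      omega
    obtain ⟨S, hSsub, hScard⟩ := Finset.exists_subset_card_eq hTcard
    obtain ⟨Z', hZ'sub, hZ'card⟩ := Finset.exists_subset_card_eq hzn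
    have hSZ : Disjoint S Z' := by
      rw [Finset.disjoint_left]
      intro x hx hx'
      exact Finset.mem_compl.mp (hSsub hx) (hZ'sub hx')
    have hIcard : (S ∪ Z').card = 2 * n := by
      rw [Finset.card_union_of_disjoint hSZ, hScard, hZ'card]; ring
    have h0 := h (S ∪ Z') hIcard
    have hSmem : S ∈ (S ∪ Z').powersetCard n :=
      Finset.mem_powersetCard.mpr ⟨Finset.subset_union_left, hScard⟩
    have hsum : ∑ C ∈ (S ∪ Z').powersetCard n, ∏ i ∈ C, a i = ∏ i ∈ S, a i := by
      refine Finset.sum_eq_single_of_mem S hSmem fun C hC hCS => ?_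
      obtain ⟨hCsub, hCcard⟩ := Finset.mem_powersetCard.mp hC
      have : ¬ C ⊆ S := by
        intro hsub
        exact hCS (Finset.eq_of_subset_of_card_le hsub (by omega))
      obtain ⟨z, hzC, hzS⟩ := Finset.not_subset.mp this
      have hzZ' : z ∈ Z' := by
        rcases Finset.mem_union.mp (hCsub hzC) with h' | h'
        · exact absurd h' hzS
        · exact h'
      have haz : a z = 0 := (Finset.mem_filter.mp (hZ'sub hzZ')).2
      exact Finset.prod_eq_zero hzC haz
    rw [hsum] at h0
    have : ∀ i ∈ S, a i ≠ 0 := by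
      intro i hi hzero
      exact Finset.mem_compl.mp (hSsub hi)
        (Finset.mem_filter.mpr ⟨Finset.mem_univ i, hzero⟩)
    exact Finset.prod_ne_zero_iff.mpr this h0
  · -- few zeros: use the descent lemma
    push_neg at hzn
    refine descent n n 0 a (by rw [← hZ]; omega) (by omega) ∅ (by simp) fun J hdisj hJcard => ?_
    exact h J (by omega)
end

section
/- For n ≥ 1, consider the 0-1 matrix A whose rows are indexed by the 2n-element subsets R of {1,…,4n}, whose columns are indexed by the n-element subsets C of {1,…,4n}, and whose (R,C)-entry is 1 if C ⊆ R and 0 otherwise. Then A has full column rank, equal to C(4n, n), over the rationals. -/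
open Finset Matrix

/-- The inclusion matrix of `a`-subsets into `b`-subsets of `Fin m`. -/
def inclMat (m a b : ℕ) :
    Matrix {R : Finset (Fin m) // R.card = b} {C : Finset (Fin m) // C.card = a} ℚ :=
  fun R C => if C.1 ⊆ R.1 then 1 else 0

/-- Counting subsets between two nested sets. -/
lemma count_between (m t : ℕ) (C R : Finset (Fin m)) (h : C ⊆ R) (ht : C.card ≤ t) :
    (((univ : Finset (Fin m)).powersetCard t).filter
      (fun S => C ⊆ S ∧ S ⊆ R)).card = (R.card - C.card).choose (t - C.card) := by
  have main : (((univ : Finset (Fin m)).powersetCard t).filter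
      (fun S => C ⊆ S ∧ S ⊆ R)).card = ((R \ C).powersetCard (t - C.card)).card := by
    apply Finset.card_bij' (fun S _ => S \ C) (fun T _ => T ∪ C)
    · intro S hS
      simp only [Finset.mem_filter, Finset.mem_powersetCard_univ] at hS
      obtain ⟨hcard, hCS, hSR⟩ := hS
      rw [Finset.mem_powersetCard]
      exact ⟨Finset.sdiff_subset_sdiff hSR Finset.Subset.rfl,
        by rw [Finset.card_sdiff_of_subset hCS, hcard]⟩
    · intro T hT
      rw [Finset.mem_powersetCard] at hT
      obtain ⟨hTsub, hTcard⟩ := hT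
      have hdisj : Disjoint T C := Finset.disjoint_of_subset_left hTsub
        (Finset.sdiff_disjoint)
      simp only [Finset.mem_filter, Finset.mem_powersetCard_univ]
      refine ⟨?_, Finset.subset_union_right, Finset.union_subset
        (hTsub.trans (Finset.sdiff_subset)) h⟩
      rw [Finset.card_union_of_disjoint hdisj, hTcard]
      omega
    · intro S hS
      simp only [Finset.mem_filter, Finset.mem_powersetCard_univ] at hS
      exact Finset.sdiff_union_of_subset hS.2.1
    · intro T hT
      rw [Finset.mem_powersetCard] at hT
      have hdisj : Disjoint T C := Finset.disjoint_of_subset_left hT.1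
        (Finset.sdiff_disjoint)
      exact Finset.union_sdiff_cancel_right hdisj
  rw [main, Finset.card_powersetCard, Finset.card_sdiff_of_subset h]

/-- Sum over the subtype of `k`-subsets of an indicator. -/
lemma sum_subtype_ind (m k : ℕ) (p : Finset (Fin m) → Prop) [DecidablePred p] (a : ℚ) :
    (∑ S : {S : Finset (Fin m) // S.card = k}, if p S.1 then a else 0)
      = a * (((univ : Finset (Fin m)).powersetCard k).filter p).card := by
  rw [← Finset.sum_subtype ((univ : Finset (Fin m)).powersetCard k)
    (fun S => Finset.mem_powersetCard_univ) (fun S => if p S then a else 0)]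
  rw [← Finset.sum_filter, Finset.sum_const, nsmul_eq_mul]
  ring

lemma inclMat_entry_mul (m a b : ℕ) (R : {R : Finset (Fin m) // R.card = b})
    (C : {C : Finset (Fin m) // C.card = a}) :
    inclMat m a b R C = if C.1 ⊆ R.1 then 1 else 0 := rfl

/-- `Uᵀ * U = D-step`: the key entry computation for `DU`. -/
lemma DU_entry (m k : ℕ) (C C' : {C : Finset (Fin m) // C.card = k}) :
    ((inclMat m k (k + 1))ᵀ * inclMat m k (k + 1)) C C'
      = (((univ : Finset (Fin m)).powersetCard (k + 1)).filter
          (fun S => C.1 ∪ C'.1 ⊆ S ∧ S ⊆ univ)).card := by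
  simp only [Matrix.mul_apply, Matrix.transpose_apply, inclMat]
  have : ∀ R : {R : Finset (Fin m) // R.card = k + 1},
      ((if C.1 ⊆ R.1 then (1:ℚ) else 0) * (if C'.1 ⊆ R.1 then 1 else 0))
        = if C.1 ∪ C'.1 ⊆ R.1 ∧ R.1 ⊆ univ then 1 else 0 := by
    intro R
    by_cases h1 : C.1 ⊆ R.1 <;> by_cases h2 : C'.1 ⊆ R.1 <;>
      simp [h1, h2, Finset.union_subset_iff, Finset.subset_univ]
  rw [Finset.sum_congr rfl (fun R _ => this R)]
  rw [sum_subtype_ind m (k+1) (fun S => C.1 ∪ C'.1 ⊆ S ∧ S ⊆ univ) 1]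
  ring

/-- The key entry computation for `UD`. -/
lemma UD_entry (m k : ℕ) (C C' : {C : Finset (Fin m) // C.card = k + 1}) :
    (inclMat m k (k + 1) * (inclMat m k (k + 1))ᵀ) C C'
      = (((univ : Finset (Fin m)).powersetCard k).filter
          (fun S => (∅ : Finset (Fin m)) ⊆ S ∧ S ⊆ C.1 ∩ C'.1)).card := by
  simp only [Matrix.mul_apply, Matrix.transpose_apply, inclMat]
  have : ∀ S : {S : Finset (Fin m) // S.card = k},
      ((if S.1 ⊆ C.1 then (1:ℚ) else 0) * (if S.1 ⊆ C'.1 then 1 else 0))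
        = if (∅ : Finset (Fin m)) ⊆ S.1 ∧ S.1 ⊆ C.1 ∩ C'.1 then 1 else 0 := by
    intro S
    by_cases h1 : S.1 ⊆ C.1 <;> by_cases h2 : S.1 ⊆ C'.1 <;>
      simp [h1, h2, Finset.subset_inter_iff, Finset.empty_subset]
  rw [Finset.sum_congr rfl (fun S _ => this S)]
  rw [sum_subtype_ind m k (fun S => (∅ : Finset (Fin m)) ⊆ S ∧ S ⊆ C.1 ∩ C'.1) 1]
  ring

/-- Commutation relation `DU = UD + (m - 2(k+1)) • 1` at level `k+1`. -/
lemma comm_rel (m k : ℕ) (hm : 2 * (k + 1) ≤ m) :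
    (inclMat m (k+1) (k + 2))ᵀ * inclMat m (k+1) (k + 2)
      = inclMat m k (k + 1) * (inclMat m k (k + 1))ᵀ
        + (((m : ℚ) - 2 * (k + 1)) • (1 : Matrix _ _ ℚ)) := by
  ext C C'
  rw [DU_entry m (k+1) C C']
  simp only [Matrix.add_apply, Matrix.smul_apply, Matrix.one_apply, smul_eq_mul]
  rw [UD_entry m k C C']
  have hCuniv : C.1 ⊆ univ := Finset.subset_univ _
  have hcardU : (univ : Finset (Fin m)).card = m := by simp
  by_cases hcc : C = C'
  · subst hcc
    have h1 : C.1 ∪ C.1 = C.1 := Finset.union_self _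
    rw [h1]
    rw [count_between m (k+2) C.1 univ hCuniv (by rw [C.2]; omega)]
    have h2 : C.1 ∩ C.1 = C.1 := Finset.inter_self _
    rw [h2, count_between m k ∅ C.1 (Finset.empty_subset _) (by simp)]
    rw [hcardU, C.2]
    simp only [Finset.card_empty, Nat.sub_zero]
    have e1 : k + 2 - (k + 1) = 1 := by omega
    rw [e1, Nat.choose_one_right, Nat.choose_succ_self_right, if_true]
    rw [Nat.cast_sub (show k + 1 ≤ m by omega)]
    push_cast
    ring
  · rw [if_neg hcc]
    have hne : C.1 ≠ C'.1 := fun h => hcc (Subtype.ext h)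
    have hunion : k + 1 < (C.1 ∪ C'.1).card := by
      rcases Nat.lt_or_ge (k+1) (C.1 ∪ C'.1).card with h | h
      · exact h
      · exfalso
        have h1 : C.1 ⊆ C.1 ∪ C'.1 := Finset.subset_union_left
        have h2 : C.1 = C.1 ∪ C'.1 :=
          Finset.eq_of_subset_of_card_le h1 (by rw [C.2]; omega)
        have h3 : C'.1 ⊆ C.1 := by rw [h2]; exact Finset.subset_union_right
        exact hne (Finset.eq_of_subset_of_card_le h3 (by rw [C.2, C'.2])).symm
    have hinter : (C.1 ∩ C'.1).card + (C.1 ∪ C'.1).card = 2 * (k + 1) := by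
      rw [add_comm, Finset.card_union_add_card_inter, C.2, C'.2]; omega
    by_cases hu : (C.1 ∪ C'.1).card ≤ k + 2
    · have hu2 : (C.1 ∪ C'.1).card = k + 2 := by omega
      rw [count_between m (k+2) (C.1 ∪ C'.1) univ (Finset.subset_univ _) (by omega)]
      rw [count_between m k ∅ (C.1 ∩ C'.1) (Finset.empty_subset _) (by simp)]
      rw [hcardU, hu2]
      have hik : (C.1 ∩ C'.1).card = k := by omega
      simp [hik]
    · -- union too big: both sides are 0
      have hleft : (((univ : Finset (Fin m)).powersetCard (k + 2)).filter
          (fun S => C.1 ∪ C'.1 ⊆ S ∧ S ⊆ univ)).card = 0 := by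
        rw [Finset.card_eq_zero, Finset.filter_eq_empty_iff]
        intro S hS
        rw [Finset.mem_powersetCard_univ] at hS
        intro ⟨h1, _⟩
        have := Finset.card_le_card h1
        omega
      have hright : (((univ : Finset (Fin m)).powersetCard k).filter
          (fun S => (∅ : Finset (Fin m)) ⊆ S ∧ S ⊆ C.1 ∩ C'.1)).card = 0 := by
        rw [Finset.card_eq_zero, Finset.filter_eq_empty_iff]
        intro S hS
        rw [Finset.mem_powersetCard_univ] at hS
        intro ⟨_, h2⟩
        have := Finset.card_le_card h2
        omega
      rw [hleft, hright]
      push_cast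
      ring

lemma dot_mul_self (ι κ : Type*) [Fintype ι] [Fintype κ] (M : Matrix ι κ ℚ) (v : κ → ℚ) :
    (M *ᵥ v) ⬝ᵥ (M *ᵥ v) = v ⬝ᵥ ((Mᵀ * M) *ᵥ v) := by
  rw [Matrix.dotProduct_mulVec v, ← Matrix.vecMul_vecMul, Matrix.vecMul_transpose,
    Matrix.dotProduct_mulVec (M *ᵥ v)]

lemma dot_self_nonneg (ι : Type*) [Fintype ι] (v : ι → ℚ) : 0 ≤ v ⬝ᵥ v :=
  Finset.sum_nonneg fun i _ => mul_self_nonneg (v i)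

/-- Injectivity of one up-step. -/
lemma up_inj (m k : ℕ) (hm : 2 * (k + 1) < m)
    (x : {C : Finset (Fin m) // C.card = k + 1} → ℚ)
    (hx : inclMat m (k+1) (k + 2) *ᵥ x = 0) : x = 0 := by
  have key : (inclMat m (k+1) (k + 2) *ᵥ x) ⬝ᵥ (inclMat m (k+1) (k + 2) *ᵥ x)
      = (((inclMat m k (k + 1))ᵀ *ᵥ x) ⬝ᵥ ((inclMat m k (k + 1))ᵀ *ᵥ x))
        + ((m : ℚ) - 2 * (k + 1)) * (x ⬝ᵥ x) := by
    rw [dot_mul_self, comm_rel m k (le_of_lt hm)]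
    rw [Matrix.add_mulVec, dotProduct_add, Matrix.smul_mulVec,
      Matrix.one_mulVec]
    congr 1
    · rw [dot_mul_self, Matrix.transpose_transpose]
    · rw [dotProduct_smul, smul_eq_mul]
  rw [hx] at key
  simp only [zero_dotProduct, dotProduct_zero] at key
  have h2 := dot_self_nonneg _ ((inclMat m k (k + 1))ᵀ *ᵥ x)
  have h3 := dot_self_nonneg _ x
  have hc : (0:ℚ) < (m : ℚ) - 2 * (k + 1) := by
    have : (2 * (k + 1) : ℚ) < m := by exact_mod_cast hm
    linarith
  have h4 : x ⬝ᵥ x = 0 := by nlinarith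
  exact dotProduct_self_eq_zero.mp h4

/-- Composition: `U * W_{a,b} = (b+1-a) • W_{a,b+1}`. -/
lemma up_comp (m a b : ℕ) (hab : a ≤ b) :
    inclMat m b (b + 1) * inclMat m a b
      = ((b + 1 - a : ℕ) : ℚ) • inclMat m a (b + 1) := by
  ext R C
  simp only [Matrix.mul_apply, Matrix.smul_apply, inclMat, smul_eq_mul]
  have : ∀ S : {S : Finset (Fin m) // S.card = b},
      ((if S.1 ⊆ R.1 then (1:ℚ) else 0) * (if C.1 ⊆ S.1 then 1 else 0))
        = if C.1 ⊆ S.1 ∧ S.1 ⊆ R.1 then 1 else 0 := by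
    intro S
    by_cases h1 : S.1 ⊆ R.1 <;> by_cases h2 : C.1 ⊆ S.1 <;> simp [h1, h2, and_comm]
  rw [Finset.sum_congr rfl (fun S _ => this S)]
  rw [sum_subtype_ind m b (fun S => C.1 ⊆ S ∧ S ⊆ R.1) 1]
  by_cases hCR : C.1 ⊆ R.1
  · rw [if_pos hCR, count_between m b C.1 R.1 hCR (by rw [C.2]; omega)]
    rw [C.2, R.2]
    have e : b + 1 - a = (b - a) + 1 := by omega
    rw [e, Nat.choose_succ_self_right]
    push_cast
    ring
  · rw [if_neg hCR]
    have : (((univ : Finset (Fin m)).powersetCard b).filter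
        (fun S => C.1 ⊆ S ∧ S ⊆ R.1)).card = 0 := by
      rw [Finset.card_eq_zero, Finset.filter_eq_empty_iff]
      intro S _
      intro ⟨h1, h2⟩
      exact hCR (h1.trans h2)
    rw [this]
    ring

/-- `W_{a,a}` is the identity. -/
lemma inclMat_self (m a : ℕ) : inclMat m a a = 1 := by
  ext R C
  simp only [inclMat, Matrix.one_apply]
  by_cases h : C.1 ⊆ R.1
  · rw [if_pos h, if_pos]
    exact (Subtype.ext (Finset.eq_of_subset_of_card_le h (by rw [C.2, R.2]))).symm
  · rw [if_neg h, if_neg]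
    intro heq
    subst heq
    exact h Finset.Subset.rfl

/-- Full-rank step: `W_{a,b}` has trivial kernel for `1 ≤ a ≤ b`, `2b ≤ m`. -/
lemma inclMat_ker (m a : ℕ) (ha : 1 ≤ a) :
    ∀ b, a ≤ b → 2 * b ≤ m →
      ∀ x : {C : Finset (Fin m) // C.card = a} → ℚ,
        inclMat m a b *ᵥ x = 0 → x = 0 := by
  intro b
  induction b with
  | zero => intro hab _ x hx; omega
  | succ b ih =>
      intro hab hm x hx
      rcases Nat.lt_or_ge a (b + 1) with hlt | hge
      · -- a ≤ b
        have hab' : a ≤ b := by omega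
        have hb1 : 1 ≤ b := le_trans ha hab'
        obtain ⟨j, rfl⟩ : ∃ j, b = j + 1 := ⟨b - 1, by omega⟩
        have hcomp := up_comp m a (j + 1) hab'
        have h0 : inclMat m (j+1) (j + 2) *ᵥ (inclMat m a (j+1) *ᵥ x) = 0 := by
          rw [Matrix.mulVec_mulVec, hcomp, Matrix.smul_mulVec, hx, smul_zero]
        have h1 : inclMat m a (j+1) *ᵥ x = 0 :=
          up_inj m j (by omega) _ h0
        exact ih hab' (by omega) x h1
      · -- a = b + 1
        have : a = b + 1 := by omega
        subst this
        rwa [inclMat_self, Matrix.one_mulVec] at hx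

/-- The 0-1 inclusion matrix whose rows are indexed by 2n-subsets R of a
4n-set, columns by n-subsets C, with entry 1 iff C ⊆ R, has full column rank C(4n,n)
over ℚ. -/
theorem stmt_6 (n : ℕ) (hn : 1 ≤ n)
    (A : Matrix {R : Finset (Fin (4 * n)) // R.card = 2 * n}
      {C : Finset (Fin (4 * n)) // C.card = n} ℚ)
    (hA : ∀ R C, A R C = if C.1 ⊆ R.1 then 1 else 0) :
    A.rank = Nat.choose (4 * n) n := by
  have hAeq : A = inclMat (4 * n) n (2 * n) := by
    ext R C; rw [hA]; rfl
  have hinj : Function.Injective A.mulVecLin := by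
    rw [← LinearMap.ker_eq_bot, LinearMap.ker_eq_bot']
    intro x hx
    simp only [Matrix.mulVecLin_apply] at hx
    rw [hAeq] at hx
    exact inclMat_ker (4 * n) n hn (2 * n) (by omega) (by omega) x hx
  rw [Matrix.rank]
  rw [LinearMap.finrank_range_of_inj hinj]
  rw [Module.finrank_fintype_fun_eq_card]
  rw [Fintype.card_finset_len]
  simp
end

section
/- Let V be a 2n-dimensional real inner product space with n ≥ 2. There exists a basis of Λ²V consisting of decomposable 2-vectors (simple 2-planes) that cannot be written in the form {wᵢ ∧ wⱼ : 1 ≤ i < j ≤ 2n} for any orthonormal basis {w₁,…,w₂ₙ} of V. -/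
open ExteriorAlgebra

namespace Stmt11Aux

variable {V : Type} [AddCommGroup V] [Module ℝ V]

lemma wedge_mem (x y : V) : ι ℝ x * ι ℝ y ∈ ⋀[ℝ]^2 V := by
  have h : (⋀[ℝ]^2 V) = LinearMap.range (ι ℝ : V →ₗ[ℝ] _) * LinearMap.range (ι ℝ : V →ₗ[ℝ] _) :=
    pow_two _
  rw [h]
  exact Submodule.mul_mem_mul (LinearMap.mem_range_self _ x) (LinearMap.mem_range_self _ y)

/-- The alternating 2-form `(x, y) ↦ ε x * η y - η x * ε y`. -/
noncomputable def dualForm (ε η : V →ₗ[ℝ] ℝ) : V [⋀^Fin 2]→ₗ[ℝ] ℝ :=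
  { (MultilinearMap.mkPiAlgebraFin ℝ 2 ℝ).compLinearMap ![ε, η] -
      (MultilinearMap.mkPiAlgebraFin ℝ 2 ℝ).compLinearMap ![η, ε] with
    map_eq_zero_of_eq' := by
      intro v i j hv hij
      have h2 : v 0 = v 1 := by
        fin_cases i <;> fin_cases j <;> simp_all
      simp [MultilinearMap.mkPiAlgebraFin_apply, List.ofFn_succ, h2, mul_comm] }

lemma dualForm_apply (ε η : V →ₗ[ℝ] ℝ) (x y : V) :
    dualForm ε η ![x, y] = ε x * η y - η x * ε y := by
  simp [dualForm, MultilinearMap.mkPiAlgebraFin_apply, List.ofFn_succ]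

/-- The linear functional on the exterior algebra induced by `dualForm` in degree 2. -/
noncomputable def dualFun (ε η : V →ₗ[ℝ] ℝ) : ExteriorAlgebra ℝ V →ₗ[ℝ] ℝ :=
  liftAlternating fun k => match k with
    | 2 => dualForm ε η
    | _ => 0

lemma ιMulti_two (x y : V) : ιMulti ℝ 2 ![x, y] = ι ℝ x * ι ℝ y := by
  simp [ιMulti_apply, List.ofFn_succ]

lemma dualFun_wedge (ε η : V →ₗ[ℝ] ℝ) (x y : V) :
    dualFun ε η (ι ℝ x * ι ℝ y) = ε x * η y - η x * ε y := by
  rw [← ιMulti_two, dualFun, liftAlternating_apply_ιMulti]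
  exact dualForm_apply ε η x y

/-- Index type for the pairs `i < j`. -/
abbrev I (m : ℕ) := {p : Fin m × Fin m // p.1 < p.2}

variable {m : ℕ} (B : Module.Basis (Fin m) ℝ V)

lemma coord_basis (i j : Fin m) : B.coord i (B j) = if j = i then 1 else 0 := by
  simp [Module.Basis.coord_apply, Module.Basis.repr_self, Finsupp.single_apply]

lemma dualFun_eval (p q : I m) :
    dualFun (B.coord q.1.1) (B.coord q.1.2) (ι ℝ (B p.1.1) * ι ℝ (B p.1.2)) =
      if p = q then 1 else 0 := by
  obtain ⟨⟨i, j⟩, hij⟩ := p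
  obtain ⟨⟨k, l⟩, hkl⟩ := q
  rw [dualFun_wedge, coord_basis, coord_basis, coord_basis, coord_basis]
  simp only [Subtype.mk_eq_mk, Prod.mk.injEq]
  split_ifs <;> simp_all <;> omega

lemma indepW : LinearIndependent ℝ (fun p : I m => ι ℝ (B p.1.1) * ι ℝ (B p.1.2)) := by
  rw [Fintype.linearIndependent_iff]
  intro g hg q
  have h := congrArg (dualFun (B.coord q.1.1) (B.coord q.1.2)) hg
  simp only [map_sum, map_smul, map_zero, smul_eq_mul, dualFun_eval, mul_ite, mul_one,
    mul_zero] at h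
  rwa [Finset.sum_ite_eq' Finset.univ q g, if_pos (Finset.mem_univ q)] at h

lemma spanW (x : ExteriorAlgebra ℝ V) (hx : x ∈ ⋀[ℝ]^2 V) :
    x ∈ Submodule.span ℝ (Set.range fun p : I m => ι ℝ (B p.1.1) * ι ℝ (B p.1.2)) := by
  set S := Submodule.span ℝ (Set.range fun p : I m => ι ℝ (B p.1.1) * ι ℝ (B p.1.2)) with hS
  have hBij : ∀ i j : Fin m, ι ℝ (B i) * ι ℝ (B j) ∈ S := by
    intro i j
    rcases lt_trichotomy i j with h | h | h
    · exact Submodule.subset_span ⟨⟨(i, j), h⟩, rfl⟩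
    · subst h; rw [ι_sq_zero]; exact zero_mem S
    · have hsw : ι ℝ (B i) * ι ℝ (B j) = -(ι ℝ (B j) * ι ℝ (B i)) :=
        eq_neg_of_add_eq_zero_left (ι_add_mul_swap _ _)
      rw [hsw]
      exact neg_mem (Submodule.subset_span ⟨⟨(j, i), h⟩, rfl⟩)
  have h1 : ∀ (i : Fin m) (v : V), ι ℝ (B i) * ι ℝ v ∈ S := by
    intro i v
    have hle : Submodule.span ℝ (Set.range B) ≤
        S.comap ((LinearMap.mulLeft ℝ (ι ℝ (B i))).comp (ι ℝ : V →ₗ[ℝ] _)) := by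
      rw [Submodule.span_le]
      rintro _ ⟨j, rfl⟩
      exact hBij i j
    have hv : v ∈ Submodule.span ℝ (Set.range B) := by rw [B.span_eq]; trivial
    exact hle hv
  have h2 : ∀ (u v : V), ι ℝ u * ι ℝ v ∈ S := by
    intro u v
    have hle : Submodule.span ℝ (Set.range B) ≤
        S.comap ((LinearMap.mulRight ℝ (ι ℝ v)).comp (ι ℝ : V →ₗ[ℝ] _)) := by
      rw [Submodule.span_le]
      rintro _ ⟨i, rfl⟩
      exact h1 i v
    have hu : u ∈ Submodule.span ℝ (Set.range B) := by rw [B.span_eq]; trivial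
    exact hle hu
  have hx' : x ∈ LinearMap.range (ι ℝ : V →ₗ[ℝ] _) * LinearMap.range (ι ℝ : V →ₗ[ℝ] _) := by
    rw [← pow_two]; exact hx
  refine Submodule.mul_induction_on hx' ?_ ?_
  · rintro _ ⟨u, rfl⟩ _ ⟨v, rfl⟩
    exact h2 u v
  · intro a b ha hb
    exact add_mem ha hb

/-- The candidate basis family inside the exterior power. -/
noncomputable def wfam (p : I m) : ⋀[ℝ]^2 V :=
  ⟨ι ℝ (B p.1.1) * ι ℝ (B p.1.2), wedge_mem _ _⟩

noncomputable def basisI : Module.Basis (I m) ℝ (⋀[ℝ]^2 V) :=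
  Module.Basis.mk (v := wfam B)
    (LinearIndependent.of_comp (⋀[ℝ]^2 V).subtype (indepW B))
    (by
      rintro ⟨x, hx⟩ -
      have h := spanW B x hx
      have hr : (Set.range fun p : I m => ι ℝ (B p.1.1) * ι ℝ (B p.1.2)) =
          (⋀[ℝ]^2 V).subtype '' Set.range (wfam B) := by
        rw [← Set.range_comp]; rfl
      rw [hr, ← Submodule.map_span] at h
      obtain ⟨y, hy, hyx⟩ := h
      exact (Subtype.ext hyx.symm : (⟨x, hx⟩ : ⋀[ℝ]^2 V) = y) ▸ hy)

lemma basisI_apply (p : I m) : basisI B p = wfam B p := Module.Basis.mk_apply _ _ _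

noncomputable def sym2Equiv (m : ℕ) : {a : Sym2 (Fin m) // ¬ a.IsDiag} ≃ I m where
  toFun a := ⟨(Sym2.sortEquiv a.1).1,
    by
      obtain ⟨a, ha⟩ := a
      induction a using Sym2.ind with
      | _ x y =>
        simp only [Sym2.mk_isDiag_iff] at ha
        simpa [Sym2.sortEquiv, Sym2.inf_mk, Sym2.sup_mk] using inf_lt_sup.mpr ha⟩
  invFun p := ⟨s(p.1.1, p.1.2), by simp [Sym2.mk_isDiag_iff]; exact p.2.ne⟩
  left_inv a := by
    obtain ⟨a, ha⟩ := a
    apply Subtype.ext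
    induction a using Sym2.ind with
    | _ x y =>
      show s((x ⊓ y : Fin m), (x ⊔ y : Fin m)) = s(x, y)
      rcases le_total x y with h | h <;>
        simp [inf_eq_left.mpr, sup_eq_right.mpr, inf_eq_right.mpr, sup_eq_left.mpr, h,
          Sym2.eq_swap]
  right_inv p := by
    obtain ⟨⟨i, j⟩, hij⟩ := p
    apply Subtype.ext
    simp [Sym2.sortEquiv, inf_eq_left.mpr hij.le, sup_eq_right.mpr hij.le]

lemma card_I (m : ℕ) : Fintype.card (I m) = m.choose 2 := by
  rw [← Fintype.card_congr (sym2Equiv m), Sym2.card_subtype_not_diag, Fintype.card_fin]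

end Stmt11Aux

open Stmt11Aux

/-- In a 2n-dimensional real inner product space (n ≥ 2), there is a basis
of Λ²V consisting of decomposable 2-vectors (u ∧ v = ι u * ι v in the exterior algebra)
which is not of the form {wᵢ ∧ wⱼ : i < j} for any orthonormal basis {w₁,…,w₂ₙ} of V. -/
theorem stmt_11 (n : ℕ) (hn : 2 ≤ n) (V : Type) [NormedAddCommGroup V]
    [InnerProductSpace ℝ V] (hdim : Module.finrank ℝ V = 2 * n) :
    ∃ b : Module.Basis (Fin (Nat.choose (2 * n) 2)) ℝ (⋀[ℝ]^2 V),
      (∀ k, ∃ u v : V, (b k : ExteriorAlgebra ℝ V) = ι ℝ u * ι ℝ v) ∧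
      ¬ ∃ w : OrthonormalBasis (Fin (2 * n)) ℝ V,
        Set.range (fun k => (b k : ExteriorAlgebra ℝ V)) =
          {x | ∃ i j : Fin (2 * n), i < j ∧ x = ι ℝ (w i) * ι ℝ (w j)} := by
  classical
  have hfd : FiniteDimensional ℝ V := FiniteDimensional.of_finrank_pos (by omega)
  set e : OrthonormalBasis (Fin (2 * n)) ℝ V :=
    (stdOrthonormalBasis ℝ V).reindex (finCongr hdim) with he
  set B : Module.Basis (Fin (2 * n)) ℝ V := e.toBasis with hB
  have i0lt : (0 : ℕ) < 2 * n := by omega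
  have i1lt : (1 : ℕ) < 2 * n := by omega
  set i0 : Fin (2 * n) := ⟨0, i0lt⟩ with hi0
  set i1 : Fin (2 * n) := ⟨1, i1lt⟩ with hi1
  have h01 : i0 < i1 := by simp [hi0, hi1, Fin.lt_def]
  set p₀ : I (2 * n) := ⟨(i0, i1), h01⟩ with hp₀
  set c : I (2 * n) → ℝˣ := fun p => if p = p₀ then Units.mk0 2 two_ne_zero else 1 with hc
  set eqI : I (2 * n) ≃ Fin ((2 * n).choose 2) := Fintype.equivFinOfCardEq (card_I (2 * n))
    with heqI
  set b : Module.Basis (Fin (Nat.choose (2 * n) 2)) ℝ (⋀[ℝ]^2 V) :=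
    ((basisI B).unitsSMul c).reindex eqI with hb
  have hbk : ∀ k, (b k : ExteriorAlgebra ℝ V) =
      ((c (eqI.symm k) : ℝˣ) : ℝ) •
        (ι ℝ (B (eqI.symm k).1.1) * ι ℝ (B (eqI.symm k).1.2)) := by
    intro k
    rw [hb, Module.Basis.reindex_apply, Module.Basis.unitsSMul_apply, basisI_apply]
    rfl
  refine ⟨b, ?_, ?_⟩
  · intro k
    refine ⟨((c (eqI.symm k) : ℝˣ) : ℝ) • B (eqI.symm k).1.1, B (eqI.symm k).1.2, ?_⟩
    rw [hbk k, map_smul, smul_mul_assoc]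
  · rintro ⟨w, hw⟩
    have hmem : (b (eqI p₀) : ExteriorAlgebra ℝ V) ∈
        Set.range (fun k => (b k : ExteriorAlgebra ℝ V)) := ⟨eqI p₀, rfl⟩
    rw [hw] at hmem
    obtain ⟨i, j, hij, heq⟩ := hmem
    have hbp : (b (eqI p₀) : ExteriorAlgebra ℝ V) =
        (2 : ℝ) • (ι ℝ (B i0) * ι ℝ (B i1)) := by
      rw [hbk, Equiv.symm_apply_apply]
      simp [hc]
      rfl
    rw [hbp] at heq
    -- apply the dual functional for the pair (i0, i1)
    have hD := congrArg (dualFun (B.coord i0) (B.coord i1)) heq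
    rw [map_smul, dualFun_wedge, dualFun_wedge] at hD
    rw [coord_basis, coord_basis, coord_basis, coord_basis] at hD
    have h10 : ¬ (i1 = i0) := by simp [hi0, hi1, Fin.ext_iff]
    rw [if_pos rfl, if_pos rfl, if_neg h10, if_neg (fun h => h10 h.symm)] at hD
    set a₀ := B.coord i0 (w i) with ha₀
    set a₁ := B.coord i1 (w i) with ha₁
    set b₀ := B.coord i0 (w j) with hb₀
    set b₁ := B.coord i1 (w j) with hb₁
    have hD2 : a₀ * b₁ - a₁ * b₀ = 2 := by
      rw [← hD]; simp
    -- norms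
    have hsum : ∀ x : V, ‖x‖ = 1 → ∑ t, (B.coord t x) ^ 2 = 1 := by
      intro x hx
      have h1 : ‖e.repr x‖ = 1 := by rw [LinearIsometryEquiv.norm_map]; exact hx
      have h2 : ∑ t, ‖e.repr x t‖ ^ 2 = 1 := by
        have := EuclideanSpace.norm_eq (e.repr x)
        rw [this, Real.sqrt_eq_one] at h1
        exact h1
      have h3 : ∀ t, B.coord t x = e.repr x t := by
        intro t
        rw [hB, Module.Basis.coord_apply, OrthonormalBasis.coe_toBasis_repr_apply]
      rw [← h2]
      refine Finset.sum_congr rfl fun t _ => ?_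
      rw [h3 t, Real.norm_eq_abs, sq_abs]
    have hbound : ∀ x : V, ‖x‖ = 1 →
        (B.coord i0 x) ^ 2 + (B.coord i1 x) ^ 2 ≤ 1 := by
      intro x hx
      have hsub : ({i0, i1} : Finset (Fin (2 * n))) ⊆ Finset.univ := Finset.subset_univ _
      have hle := Finset.sum_le_sum_of_subset_of_nonneg hsub
        (fun t _ _ => sq_nonneg (B.coord t x))
      rw [Finset.sum_pair (fun h : i0 = i1 => h10 h.symm)] at hle
      rw [← hsum x hx]
      exact hle
    have hua := hbound (w i) (w.orthonormal.1 i)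
    have hub := hbound (w j) (w.orthonormal.1 j)
    rw [← ha₀, ← ha₁] at hua
    rw [← hb₀, ← hb₁] at hub
    nlinarith [sq_nonneg (a₀ * b₀ + a₁ * b₁), sq_nonneg a₀, sq_nonneg a₁, sq_nonneg b₀,
      sq_nonneg b₁, sq_nonneg (a₀ * b₁ - a₁ * b₀), mul_nonneg (add_nonneg (sq_nonneg a₀)
      (sq_nonneg a₁)) (add_nonneg (sq_nonneg b₀) (sq_nonneg b₁))]
end

section
/- Let {e₁,…,e₂ₙ} and {w₁,…,w₂ₙ} be orthonormal bases of a real inner product space V. If e₁ ∧ e₂ = ± w_i ∧ w_j and e₁ ∧ e₃ = ± w_r ∧ w_s for index pairs {i,j} and {r,s}, then {i,j} ∩ {r,s} ≠ ∅, and moreover the common vector equals ± e₁ while the remaining vectors equal ± e₂ and ± e₃ respectively. -/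
open ExteriorAlgebra

section helpers


variable {V : Type} [NormedAddCommGroup V] [InnerProductSpace ℝ V]

noncomputable def bform (u v : V) : V [⋀^Fin 2]→ₗ[ℝ] ℝ where
  toMultilinearMap :=
  { toFun := fun m => (inner ℝ u (m 0) : ℝ) * inner ℝ v (m 1) - (inner ℝ v (m 0) : ℝ) * inner ℝ u (m 1)
    map_update_add' := by
      intro dec m p x y
      fin_cases p <;>
        simp [Function.update_self, Function.update_of_ne, inner_add_right] <;> ring
    map_update_smul' := by
      intro dec m p c x
      fin_cases p <;>
        simp [Function.update_self, Function.update_of_ne, inner_smul_right] <;> ring }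
  map_eq_zero_of_eq' := by
    intro m p q hm hpq
    fin_cases p <;> fin_cases q <;> simp_all <;> ring

lemma lift2 (f : ∀ i, V [⋀^Fin i]→ₗ[ℝ] ℝ) (a b : V) :
    liftAlternating f (ι ℝ a * ι ℝ b) = f 2 ![a, b] := by
  have : ι ℝ a * ι ℝ b = ιMulti ℝ 2 ![a, b] := by
    simp [ιMulti_apply, List.ofFn_succ]
  rw [this, liftAlternating_apply_ιMulti]

lemma wedge_pm (a b c d : V)
    (h : ι ℝ a * ι ℝ b = ι ℝ c * ι ℝ d ∨ ι ℝ a * ι ℝ b = -(ι ℝ c * ι ℝ d)) :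
    ∃ ε : ℝ, (ε = 1 ∨ ε = -1) ∧ ∀ u v : V,
      (inner ℝ u a : ℝ) * inner ℝ v b - (inner ℝ v a : ℝ) * inner ℝ u b
        = ε * ((inner ℝ u c : ℝ) * inner ℝ v d - (inner ℝ v c : ℝ) * inner ℝ u d) := by
  have main : ∀ u v : V, ∀ x y : ExteriorAlgebra ℝ V, x = y →
      liftAlternating (Function.update (fun _ => 0) 2 (bform u v)) x
        = liftAlternating (Function.update (fun _ => 0) 2 (bform u v)) y :=
    fun u v x y hxy => by rw [hxy]
  rcases h with h | h
  · refine ⟨1, Or.inl rfl, fun u v => ?_⟩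
    have := main u v _ _ h
    rw [lift2, lift2, Function.update_self] at this
    simpa [bform] using this
  · refine ⟨-1, Or.inr rfl, fun u v => ?_⟩
    have := main u v _ _ h
    rw [map_neg, lift2, lift2, Function.update_self] at this
    simpa [bform] using this

/-- indicator determinant -/
noncomputable def ind {N : ℕ} (i j p q : Fin N) : ℝ :=
  (if p = i then (1:ℝ) else 0) * (if q = j then (1:ℝ) else 0)
    - (if q = i then (1:ℝ) else 0) * (if p = j then (1:ℝ) else 0)

lemma support_aux {N : ℕ} {i j : Fin N} (hij : i ≠ j) {A B : Fin N → ℝ} {ε : ℝ} (hε : ε ≠ 0)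
    (key : ∀ p q, A p * B q - A q * B p = ε * ind i j p q) :
    ∀ p, p ≠ i → p ≠ j → A p = 0 ∧ B p = 0 := by
  intro p hpi hpj
  have h1 := key p i
  have h2 := key p j
  have h3 := key i j
  simp [ind, hpi, hpj, hij, Ne.symm hij] at h1 h2 h3
  constructor
  · have hA : A p * ε = 0 := by linear_combination (-(A p)) * h3 + A i * h2 - A j * h1
    exact (mul_eq_zero.mp hA).resolve_right hε
  · have hB : B p * ε = 0 := by linear_combination (-(B p)) * h3 - B j * h1 + B i * h2
    exact (mul_eq_zero.mp hB).resolve_right hε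

lemma sum_pair_of_support {N : ℕ} {i j : Fin N} (hij : i ≠ j) {f : Fin N → ℝ}
    (hf : ∀ p, p ≠ i → p ≠ j → f p = 0) : ∑ p, f p = f i + f j := by
  rw [← Finset.sum_subset (Finset.subset_univ ({i, j} : Finset (Fin N)))
      (fun p _ hp => hf p (fun h => hp (by simp [h])) (fun h => hp (by simp [h])))]
  rw [Finset.sum_insert (by simp [hij]), Finset.sum_singleton]

lemma sum_single_of_support {N : ℕ} {k : Fin N} {f : Fin N → ℝ}
    (hf : ∀ p, p ≠ k → f p = 0) : ∑ p, f p = f k :=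
  Finset.sum_eq_single k (fun p _ hp => hf p hp) (fun h => absurd (Finset.mem_univ k) h)

lemma onecase {N : ℕ} {i j s : Fin N} (hij : i ≠ j) (his : i ≠ s)
    {a b c : Fin N → ℝ} {ε ε' : ℝ} (hε : ε ≠ 0) (hε' : ε' ≠ 0)
    (key1 : ∀ p q, a p * b q - a q * b p = ε * ind i j p q)
    (key2 : ∀ p q, a p * c q - a q * c p = ε' * ind i s p q)
    (saa : ∑ p, a p * a p = 1)
    (sab : ∑ p, a p * b p = 0)
    (sac : ∑ p, a p * c p = 0)
    (sbc : ∑ p, b p * c p = 0) :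
    (∀ p, p ≠ i → a p = 0) ∧ (∀ p, p ≠ j → b p = 0) ∧ (∀ p, p ≠ s → c p = 0) := by
  have sup1 := support_aux hij hε key1
  have sup2 := support_aux his hε' key2
  by_cases hjs : j = s
  · -- contradiction case: {i,j} = {i,s}
    exfalso
    subst hjs
    have mi1 : a i * b j - a j * b i = ε := by
      have := key1 i j; simp [ind, hij, Ne.symm hij] at this; linarith [this]
    have mi2 : a i * c j - a j * c i = ε' := by
      have := key2 i j; simp [ind, hij, Ne.symm hij] at this; linarith [this]
    have saa' : a i * a i + a j * a j = 1 := by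
      have e := sum_pair_of_support (f := fun p => a p * a p) hij
        (fun p h1 h2 => by simp [(sup1 p h1 h2).1])
      rw [saa] at e; exact e.symm
    have sab' : a i * b i + a j * b j = 0 := by
      have e := sum_pair_of_support (f := fun p => a p * b p) hij
        (fun p h1 h2 => by simp [(sup1 p h1 h2).1])
      rw [sab] at e; exact e.symm
    have sac' : a i * c i + a j * c j = 0 := by
      have e := sum_pair_of_support (f := fun p => a p * c p) hij
        (fun p h1 h2 => by simp [(sup1 p h1 h2).1])
      rw [sac] at e; exact e.symm
    have sbc' : b i * c i + b j * c j = 0 := by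
      have e := sum_pair_of_support (f := fun p => b p * c p) hij
        (fun p h1 h2 => by simp [(sup1 p h1 h2).2])
      rw [sbc] at e; exact e.symm
    have h0 : ε * ε' = (a i * a i + a j * a j) * (b i * c i + b j * c j)
        - (a i * c i + a j * c j) * (a i * b i + a j * b j) := by
      rw [← mi1, ← mi2]; ring
    rw [saa', sab', sac', sbc'] at h0
    exact (mul_ne_zero hε hε') (by linarith)
  · have ha : ∀ p, p ≠ i → a p = 0 := by
      intro p hpi
      by_cases hpj : p = j
      · subst hpj; exact (sup2 p hpi hjs).1
      · exact (sup1 p hpi hpj).1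
    have hai : a i * a i = 1 := by
      have e := sum_single_of_support (f := fun p => a p * a p) (k := i)
        (fun p hp => by simp [ha p hp])
      rw [saa] at e; exact e.symm
    have hai0 : a i ≠ 0 := by intro h0; rw [h0] at hai; simp at hai
    have hbi : b i = 0 := by
      have e := sum_single_of_support (f := fun p => a p * b p) (k := i)
        (fun q hq => by simp [ha q hq])
      rw [sab] at e
      exact (mul_eq_zero.mp e.symm).resolve_left hai0
    have hci : c i = 0 := by
      have e := sum_single_of_support (f := fun p => a p * c p) (k := i)
        (fun q hq => by simp [ha q hq])
      rw [sac] at e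
      exact (mul_eq_zero.mp e.symm).resolve_left hai0
    refine ⟨ha, ?_, ?_⟩
    · intro p hpj
      by_cases hpi : p = i
      · rw [hpi]; exact hbi
      · exact (sup1 p hpi hpj).2
    · intro p hps
      by_cases hpi : p = i
      · rw [hpi]; exact hci
      · exact (sup2 p hpi hps).2

lemma vec_pm {N : ℕ} (w : OrthonormalBasis (Fin N) ℝ V) (k : Fin N) (x : V)
    (hsupp : ∀ p, p ≠ k → (inner ℝ (w p) x : ℝ) = 0) (hx : (inner ℝ x x : ℝ) = 1) :
    w k = x ∨ w k = -x := by
  have hrep := w.sum_repr' x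
  have hsum : (∑ p, (inner ℝ (w p) x : ℝ) • w p) = (inner ℝ (w k) x : ℝ) • w k :=
    Finset.sum_eq_single k (fun p _ hp => by rw [hsupp p hp, zero_smul])
      (fun h => absurd (Finset.mem_univ k) h)
  have hx' : x = (inner ℝ (w k) x : ℝ) • w k := hrep.symm.trans hsum
  have hs : ∑ p, (inner ℝ (w p) x : ℝ) * inner ℝ (w p) x = (inner ℝ x x : ℝ) := by
    rw [← w.sum_inner_mul_inner x x]
    exact Finset.sum_congr rfl fun p _ => by rw [real_inner_comm x (w p)]
  have hk2 : (inner ℝ (w k) x : ℝ) * inner ℝ (w k) x = 1 := by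
    have e := sum_single_of_support (f := fun p => (inner ℝ (w p) x : ℝ) * inner ℝ (w p) x)
      (k := k) (fun p hp => by simp [hsupp p hp])
    rw [hs, hx] at e; exact e.symm
  rcases mul_self_eq_one_iff.mp hk2 with h | h
  · left; rw [hx', h, one_smul]
  · right; rw [hx', h]; simp

end helpers

/-- If {e} and {w} are orthonormal bases of V and
e₁ ∧ e₂ = ± wᵢ ∧ wⱼ, e₁ ∧ e₃ = ± wᵣ ∧ wₛ (wedge taken in the exterior algebra),
then the index pairs {i,j} and {r,s} share a common index k, with wₖ = ± e₁, and the
remaining vectors equal ± e₂ and ± e₃ respectively. -/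
theorem stmt_12 (n : ℕ) (hn : 2 ≤ n) (V : Type) [NormedAddCommGroup V]
    [InnerProductSpace ℝ V]
    (e w : OrthonormalBasis (Fin (2 * n)) ℝ V)
    (i j r s : Fin (2 * n)) (hij : i ≠ j) (hrs : r ≠ s)
    (h1 : ι ℝ (e ⟨0, by omega⟩) * ι ℝ (e ⟨1, by omega⟩) = ι ℝ (w i) * ι ℝ (w j) ∨
          ι ℝ (e ⟨0, by omega⟩) * ι ℝ (e ⟨1, by omega⟩) = -(ι ℝ (w i) * ι ℝ (w j)))
    (h2 : ι ℝ (e ⟨0, by omega⟩) * ι ℝ (e ⟨2, by omega⟩) = ι ℝ (w r) * ι ℝ (w s) ∨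
          ι ℝ (e ⟨0, by omega⟩) * ι ℝ (e ⟨2, by omega⟩) = -(ι ℝ (w r) * ι ℝ (w s))) :
    (({i, j} : Finset (Fin (2 * n))) ∩ ({r, s} : Finset (Fin (2 * n)))).Nonempty ∧
    ∃ k l m : Fin (2 * n),
      ({i, j} : Finset (Fin (2 * n))) = {k, l} ∧
      ({r, s} : Finset (Fin (2 * n))) = {k, m} ∧
      (w k = e ⟨0, by omega⟩ ∨ w k = -e ⟨0, by omega⟩) ∧
      (w l = e ⟨1, by omega⟩ ∨ w l = -e ⟨1, by omega⟩) ∧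
      (w m = e ⟨2, by omega⟩ ∨ w m = -e ⟨2, by omega⟩) := by
  obtain ⟨ε, hεpm, key1⟩ := wedge_pm _ _ _ _ h1
  obtain ⟨ε', hεpm', key2⟩ := wedge_pm _ _ _ _ h2
  have hε : ε ≠ 0 := by rcases hεpm with h | h <;> rw [h] <;> norm_num
  have hε' : ε' ≠ 0 := by rcases hεpm' with h | h <;> rw [h] <;> norm_num
  have hwo : ∀ p q : Fin (2 * n), (inner ℝ (w p) (w q) : ℝ) = if p = q then 1 else 0 :=
    orthonormal_iff_ite.mp w.orthonormal
  have heo : ∀ p q : Fin (2 * n), (inner ℝ (e p) (e q) : ℝ) = if p = q then 1 else 0 :=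
    orthonormal_iff_ite.mp e.orthonormal
  have key1' : ∀ p q : Fin (2 * n),
      (inner ℝ (w p) (e ⟨0, by omega⟩) : ℝ) * inner ℝ (w q) (e ⟨1, by omega⟩)
        - (inner ℝ (w q) (e ⟨0, by omega⟩) : ℝ) * inner ℝ (w p) (e ⟨1, by omega⟩)
        = ε * ind i j p q := by
    intro p q
    have h := key1 (w p) (w q)
    rw [hwo p i, hwo q j, hwo q i, hwo p j] at h
    simp only [ind]
    exact h
  have key2' : ∀ p q : Fin (2 * n),
      (inner ℝ (w p) (e ⟨0, by omega⟩) : ℝ) * inner ℝ (w q) (e ⟨2, by omega⟩)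
        - (inner ℝ (w q) (e ⟨0, by omega⟩) : ℝ) * inner ℝ (w p) (e ⟨2, by omega⟩)
        = ε' * ind r s p q := by
    intro p q
    have h := key2 (w p) (w q)
    rw [hwo p r, hwo q s, hwo q r, hwo p s] at h
    simp only [ind]
    exact h
  have key1f : ∀ p q : Fin (2 * n),
      (inner ℝ (w p) (e ⟨0, by omega⟩) : ℝ) * inner ℝ (w q) (e ⟨1, by omega⟩)
        - (inner ℝ (w q) (e ⟨0, by omega⟩) : ℝ) * inner ℝ (w p) (e ⟨1, by omega⟩)
        = (-ε) * ind j i p q := by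
    intro p q
    have h := key1' p q
    simp only [ind] at h ⊢
    linear_combination h
  have key2f : ∀ p q : Fin (2 * n),
      (inner ℝ (w p) (e ⟨0, by omega⟩) : ℝ) * inner ℝ (w q) (e ⟨2, by omega⟩)
        - (inner ℝ (w q) (e ⟨0, by omega⟩) : ℝ) * inner ℝ (w p) (e ⟨2, by omega⟩)
        = (-ε') * ind s r p q := by
    intro p q
    have h := key2' p q
    simp only [ind] at h ⊢
    linear_combination h
  have hsum : ∀ x y : V, ∑ p, (inner ℝ (w p) x : ℝ) * inner ℝ (w p) y = (inner ℝ x y : ℝ) := by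
    intro x y
    rw [← w.sum_inner_mul_inner x y]
    exact Finset.sum_congr rfl fun p _ => by rw [real_inner_comm x (w p)]
  have saa : ∑ p, (inner ℝ (w p) (e ⟨0, by omega⟩) : ℝ) * inner ℝ (w p) (e ⟨0, by omega⟩) = 1 := by
    rw [hsum, heo]; simp
  have sab : ∑ p, (inner ℝ (w p) (e ⟨0, by omega⟩) : ℝ) * inner ℝ (w p) (e ⟨1, by omega⟩) = 0 := by
    rw [hsum, heo]; simp [Fin.mk.injEq]
  have sac : ∑ p, (inner ℝ (w p) (e ⟨0, by omega⟩) : ℝ) * inner ℝ (w p) (e ⟨2, by omega⟩) = 0 := by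
    rw [hsum, heo]; simp [Fin.mk.injEq]
  have sbc : ∑ p, (inner ℝ (w p) (e ⟨1, by omega⟩) : ℝ) * inner ℝ (w p) (e ⟨2, by omega⟩) = 0 := by
    rw [hsum, heo]; simp [Fin.mk.injEq]
  have he00 : (inner ℝ (e (⟨0, by omega⟩ : Fin (2 * n))) (e ⟨0, by omega⟩) : ℝ) = 1 := by
    rw [heo]; simp
  have he11 : (inner ℝ (e (⟨1, by omega⟩ : Fin (2 * n))) (e ⟨1, by omega⟩) : ℝ) = 1 := by
    rw [heo]; simp
  have he22 : (inner ℝ (e (⟨2, by omega⟩ : Fin (2 * n))) (e ⟨2, by omega⟩) : ℝ) = 1 := by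
    rw [heo]; simp
  have hcommon : i = r ∨ i = s ∨ j = r ∨ j = s := by
    by_contra hc
    push_neg at hc
    obtain ⟨hir, his2, hjr, hjs2⟩ := hc
    have sup1 := support_aux hij hε key1'
    have sup2 := support_aux hrs hε' key2'
    have hall : ∀ p, (inner ℝ (w p) (e (⟨0, by omega⟩ : Fin (2 * n))) : ℝ) = 0 := by
      intro p
      by_cases hpi : p = i
      · exact (sup2 p (by rw [hpi]; exact hir) (by rw [hpi]; exact his2)).1
      · by_cases hpj : p = j
        · exact (sup2 p (by rw [hpj]; exact hjr) (by rw [hpj]; exact hjs2)).1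
        · exact (sup1 p hpi hpj).1
    have h1sum : (1 : ℝ) = 0 := by
      rw [← saa]
      exact Finset.sum_eq_zero fun p _ => by simp [hall p]
    norm_num at h1sum
  rcases hcommon with hh | hh | hh | hh
  · subst hh
    obtain ⟨ha, hb, hc⟩ := onecase hij hrs hε hε' key1' key2' saa sab sac sbc
    exact ⟨⟨i, by simp⟩, i, j, s, rfl, rfl,
      vec_pm w i _ ha he00, vec_pm w j _ hb he11, vec_pm w s _ hc he22⟩
  · subst hh
    obtain ⟨ha, hb, hc⟩ := onecase hij (Ne.symm hrs) hε (neg_ne_zero.mpr hε')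
      key1' key2f saa sab sac sbc
    exact ⟨⟨i, by simp⟩, i, j, r, rfl, Finset.pair_comm r i,
      vec_pm w i _ ha he00, vec_pm w j _ hb he11, vec_pm w r _ hc he22⟩
  · subst hh
    obtain ⟨ha, hb, hc⟩ := onecase (Ne.symm hij) hrs (neg_ne_zero.mpr hε) hε'
      key1f key2' saa sab sac sbc
    exact ⟨⟨j, by simp⟩, j, i, s, Finset.pair_comm i j, rfl,
      vec_pm w j _ ha he00, vec_pm w i _ hb he11, vec_pm w s _ hc he22⟩
  · subst hh
    obtain ⟨ha, hb, hc⟩ := onecase (Ne.symm hij) (Ne.symm hrs) (neg_ne_zero.mpr hε)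
      (neg_ne_zero.mpr hε') key1f key2f saa sab sac sbc
    exact ⟨⟨j, by simp⟩, j, i, r, Finset.pair_comm i j, Finset.pair_comm r j,
      vec_pm w j _ ha he00, vec_pm w i _ hb he11, vec_pm w r _ hc he22⟩
end

section
/- Let W be an algebraic curvature tensor on ℝ⁸ = ℝ⁴ ⊕ ℝ⁴ defined as W₁ ⊕ 0, where W₁ is a nonzero trace-free algebraic curvature tensor on the first ℝ⁴ factor and W vanishes whenever any argument lies in the second factor. Let Ŵ₄ : Λ⁴ℝ⁸ → Λ⁴ℝ⁸ be the fourth Weyl curvature operator defined by Ŵ₄(u₁∧u₂∧u₃∧u₄) = (1/4!) Σ_{σ∈S₄} ε(σ) Ŵ(u_{σ(1)}∧u_{σ(2)}) ∧ Ŵ(u_{σ(3)}∧u_{σ(4)}). Then Ŵ₄ does not commute with the Hodge star: with {e₁,…,e₈} the standard basis, Ŵ₄(*(e₁∧e₂∧e₃∧e₄)) = 0 while *(Ŵ₄(e₁∧e₂∧e₃∧e₄)) ≠ 0. -/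
/-- The fourth (Weyl) curvature tensor of an algebraic curvature tensor `W` on ℝ⁸,
evaluated on tuples of standard basis vectors indexed by `u v : Fin 4 → Fin 8`:
W₄(u,v) = (1/(2²·4!)) Σ_{σ,τ∈S₄} ε(σ)ε(τ) W(u_{σ0},u_{σ1},v_{τ0},v_{τ1}) W(u_{σ2},u_{σ3},v_{τ2},v_{τ3}).
This gives the matrix entries ⟨Ŵ₄(e_{u₀}∧e_{u₁}∧e_{u₂}∧e_{u₃}), e_{v₀}∧e_{v₁}∧e_{v₂}∧e_{v₃}⟩. -/
noncomputable def weylFour (W : Fin 8 → Fin 8 → Fin 8 → Fin 8 → ℝ)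
    (u v : Fin 4 → Fin 8) : ℝ :=
  (1 / (2 ^ 2 * Nat.factorial 4 : ℝ)) *
    ∑ σ : Equiv.Perm (Fin 4), ∑ τ : Equiv.Perm (Fin 4),
      ((Equiv.Perm.sign σ : ℤ) * (Equiv.Perm.sign τ : ℤ) : ℝ) *
        (W (u (σ 0)) (u (σ 1)) (v (τ 0)) (v (τ 1)) *
          W (u (σ 2)) (u (σ 3)) (v (τ 2)) (v (τ 3)))

private def s13p0 : Equiv.Perm (Fin 4) := ⟨![0,1,2,3], ![0,1,2,3], by decide, by decide⟩
private def s13p1 : Equiv.Perm (Fin 4) := ⟨![0,1,3,2], ![0,1,3,2], by decide, by decide⟩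
private def s13p2 : Equiv.Perm (Fin 4) := ⟨![0,2,1,3], ![0,2,1,3], by decide, by decide⟩
private def s13p3 : Equiv.Perm (Fin 4) := ⟨![0,2,3,1], ![0,3,1,2], by decide, by decide⟩
private def s13p4 : Equiv.Perm (Fin 4) := ⟨![0,3,1,2], ![0,2,3,1], by decide, by decide⟩
private def s13p5 : Equiv.Perm (Fin 4) := ⟨![0,3,2,1], ![0,3,2,1], by decide, by decide⟩
private def s13p6 : Equiv.Perm (Fin 4) := ⟨![1,0,2,3], ![1,0,2,3], by decide, by decide⟩
private def s13p7 : Equiv.Perm (Fin 4) := ⟨![1,0,3,2], ![1,0,3,2], by decide, by decide⟩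
private def s13p8 : Equiv.Perm (Fin 4) := ⟨![1,2,0,3], ![2,0,1,3], by decide, by decide⟩
private def s13p9 : Equiv.Perm (Fin 4) := ⟨![1,2,3,0], ![3,0,1,2], by decide, by decide⟩
private def s13p10 : Equiv.Perm (Fin 4) := ⟨![1,3,0,2], ![2,0,3,1], by decide, by decide⟩
private def s13p11 : Equiv.Perm (Fin 4) := ⟨![1,3,2,0], ![3,0,2,1], by decide, by decide⟩
private def s13p12 : Equiv.Perm (Fin 4) := ⟨![2,0,1,3], ![1,2,0,3], by decide, by decide⟩
private def s13p13 : Equiv.Perm (Fin 4) := ⟨![2,0,3,1], ![1,3,0,2], by decide, by decide⟩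
private def s13p14 : Equiv.Perm (Fin 4) := ⟨![2,1,0,3], ![2,1,0,3], by decide, by decide⟩
private def s13p15 : Equiv.Perm (Fin 4) := ⟨![2,1,3,0], ![3,1,0,2], by decide, by decide⟩
private def s13p16 : Equiv.Perm (Fin 4) := ⟨![2,3,0,1], ![2,3,0,1], by decide, by decide⟩
private def s13p17 : Equiv.Perm (Fin 4) := ⟨![2,3,1,0], ![3,2,0,1], by decide, by decide⟩
private def s13p18 : Equiv.Perm (Fin 4) := ⟨![3,0,1,2], ![1,2,3,0], by decide, by decide⟩
private def s13p19 : Equiv.Perm (Fin 4) := ⟨![3,0,2,1], ![1,3,2,0], by decide, by decide⟩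
private def s13p20 : Equiv.Perm (Fin 4) := ⟨![3,1,0,2], ![2,1,3,0], by decide, by decide⟩
private def s13p21 : Equiv.Perm (Fin 4) := ⟨![3,1,2,0], ![3,1,2,0], by decide, by decide⟩
private def s13p22 : Equiv.Perm (Fin 4) := ⟨![3,2,0,1], ![2,3,1,0], by decide, by decide⟩
private def s13p23 : Equiv.Perm (Fin 4) := ⟨![3,2,1,0], ![3,2,1,0], by decide, by decide⟩

private lemma s13p0e0 : s13p0 0 = (0 : Fin 4) := rfl
private lemma s13p0e1 : s13p0 1 = (1 : Fin 4) := rfl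
private lemma s13p0e2 : s13p0 2 = (2 : Fin 4) := rfl
private lemma s13p0e3 : s13p0 3 = (3 : Fin 4) := rfl
private lemma s13p1e0 : s13p1 0 = (0 : Fin 4) := rfl
private lemma s13p1e1 : s13p1 1 = (1 : Fin 4) := rfl
private lemma s13p1e2 : s13p1 2 = (3 : Fin 4) := rfl
private lemma s13p1e3 : s13p1 3 = (2 : Fin 4) := rfl
private lemma s13p2e0 : s13p2 0 = (0 : Fin 4) := rfl
private lemma s13p2e1 : s13p2 1 = (2 : Fin 4) := rfl
private lemma s13p2e2 : s13p2 2 = (1 : Fin 4) := rfl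
private lemma s13p2e3 : s13p2 3 = (3 : Fin 4) := rfl
private lemma s13p3e0 : s13p3 0 = (0 : Fin 4) := rfl
private lemma s13p3e1 : s13p3 1 = (2 : Fin 4) := rfl
private lemma s13p3e2 : s13p3 2 = (3 : Fin 4) := rfl
private lemma s13p3e3 : s13p3 3 = (1 : Fin 4) := rfl
private lemma s13p4e0 : s13p4 0 = (0 : Fin 4) := rfl
private lemma s13p4e1 : s13p4 1 = (3 : Fin 4) := rfl
private lemma s13p4e2 : s13p4 2 = (1 : Fin 4) := rfl
private lemma s13p4e3 : s13p4 3 = (2 : Fin 4) := rfl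
private lemma s13p5e0 : s13p5 0 = (0 : Fin 4) := rfl
private lemma s13p5e1 : s13p5 1 = (3 : Fin 4) := rfl
private lemma s13p5e2 : s13p5 2 = (2 : Fin 4) := rfl
private lemma s13p5e3 : s13p5 3 = (1 : Fin 4) := rfl
private lemma s13p6e0 : s13p6 0 = (1 : Fin 4) := rfl
private lemma s13p6e1 : s13p6 1 = (0 : Fin 4) := rfl
private lemma s13p6e2 : s13p6 2 = (2 : Fin 4) := rfl
private lemma s13p6e3 : s13p6 3 = (3 : Fin 4) := rfl
private lemma s13p7e0 : s13p7 0 = (1 : Fin 4) := rfl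
private lemma s13p7e1 : s13p7 1 = (0 : Fin 4) := rfl
private lemma s13p7e2 : s13p7 2 = (3 : Fin 4) := rfl
private lemma s13p7e3 : s13p7 3 = (2 : Fin 4) := rfl
private lemma s13p8e0 : s13p8 0 = (1 : Fin 4) := rfl
private lemma s13p8e1 : s13p8 1 = (2 : Fin 4) := rfl
private lemma s13p8e2 : s13p8 2 = (0 : Fin 4) := rfl
private lemma s13p8e3 : s13p8 3 = (3 : Fin 4) := rfl
private lemma s13p9e0 : s13p9 0 = (1 : Fin 4) := rfl
private lemma s13p9e1 : s13p9 1 = (2 : Fin 4) := rfl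
private lemma s13p9e2 : s13p9 2 = (3 : Fin 4) := rfl
private lemma s13p9e3 : s13p9 3 = (0 : Fin 4) := rfl
private lemma s13p10e0 : s13p10 0 = (1 : Fin 4) := rfl
private lemma s13p10e1 : s13p10 1 = (3 : Fin 4) := rfl
private lemma s13p10e2 : s13p10 2 = (0 : Fin 4) := rfl
private lemma s13p10e3 : s13p10 3 = (2 : Fin 4) := rfl
private lemma s13p11e0 : s13p11 0 = (1 : Fin 4) := rfl
private lemma s13p11e1 : s13p11 1 = (3 : Fin 4) := rfl
private lemma s13p11e2 : s13p11 2 = (2 : Fin 4) := rfl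
private lemma s13p11e3 : s13p11 3 = (0 : Fin 4) := rfl
private lemma s13p12e0 : s13p12 0 = (2 : Fin 4) := rfl
private lemma s13p12e1 : s13p12 1 = (0 : Fin 4) := rfl
private lemma s13p12e2 : s13p12 2 = (1 : Fin 4) := rfl
private lemma s13p12e3 : s13p12 3 = (3 : Fin 4) := rfl
private lemma s13p13e0 : s13p13 0 = (2 : Fin 4) := rfl
private lemma s13p13e1 : s13p13 1 = (0 : Fin 4) := rfl
private lemma s13p13e2 : s13p13 2 = (3 : Fin 4) := rfl
private lemma s13p13e3 : s13p13 3 = (1 : Fin 4) := rfl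
private lemma s13p14e0 : s13p14 0 = (2 : Fin 4) := rfl
private lemma s13p14e1 : s13p14 1 = (1 : Fin 4) := rfl
private lemma s13p14e2 : s13p14 2 = (0 : Fin 4) := rfl
private lemma s13p14e3 : s13p14 3 = (3 : Fin 4) := rfl
private lemma s13p15e0 : s13p15 0 = (2 : Fin 4) := rfl
private lemma s13p15e1 : s13p15 1 = (1 : Fin 4) := rfl
private lemma s13p15e2 : s13p15 2 = (3 : Fin 4) := rfl
private lemma s13p15e3 : s13p15 3 = (0 : Fin 4) := rfl
private lemma s13p16e0 : s13p16 0 = (2 : Fin 4) := rfl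
private lemma s13p16e1 : s13p16 1 = (3 : Fin 4) := rfl
private lemma s13p16e2 : s13p16 2 = (0 : Fin 4) := rfl
private lemma s13p16e3 : s13p16 3 = (1 : Fin 4) := rfl
private lemma s13p17e0 : s13p17 0 = (2 : Fin 4) := rfl
private lemma s13p17e1 : s13p17 1 = (3 : Fin 4) := rfl
private lemma s13p17e2 : s13p17 2 = (1 : Fin 4) := rfl
private lemma s13p17e3 : s13p17 3 = (0 : Fin 4) := rfl
private lemma s13p18e0 : s13p18 0 = (3 : Fin 4) := rfl
private lemma s13p18e1 : s13p18 1 = (0 : Fin 4) := rfl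
private lemma s13p18e2 : s13p18 2 = (1 : Fin 4) := rfl
private lemma s13p18e3 : s13p18 3 = (2 : Fin 4) := rfl
private lemma s13p19e0 : s13p19 0 = (3 : Fin 4) := rfl
private lemma s13p19e1 : s13p19 1 = (0 : Fin 4) := rfl
private lemma s13p19e2 : s13p19 2 = (2 : Fin 4) := rfl
private lemma s13p19e3 : s13p19 3 = (1 : Fin 4) := rfl
private lemma s13p20e0 : s13p20 0 = (3 : Fin 4) := rfl
private lemma s13p20e1 : s13p20 1 = (1 : Fin 4) := rfl
private lemma s13p20e2 : s13p20 2 = (0 : Fin 4) := rfl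
private lemma s13p20e3 : s13p20 3 = (2 : Fin 4) := rfl
private lemma s13p21e0 : s13p21 0 = (3 : Fin 4) := rfl
private lemma s13p21e1 : s13p21 1 = (1 : Fin 4) := rfl
private lemma s13p21e2 : s13p21 2 = (2 : Fin 4) := rfl
private lemma s13p21e3 : s13p21 3 = (0 : Fin 4) := rfl
private lemma s13p22e0 : s13p22 0 = (3 : Fin 4) := rfl
private lemma s13p22e1 : s13p22 1 = (2 : Fin 4) := rfl
private lemma s13p22e2 : s13p22 2 = (0 : Fin 4) := rfl
private lemma s13p22e3 : s13p22 3 = (1 : Fin 4) := rfl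
private lemma s13p23e0 : s13p23 0 = (3 : Fin 4) := rfl
private lemma s13p23e1 : s13p23 1 = (2 : Fin 4) := rfl
private lemma s13p23e2 : s13p23 2 = (1 : Fin 4) := rfl
private lemma s13p23e3 : s13p23 3 = (0 : Fin 4) := rfl
private lemma s13s0 : (((Equiv.Perm.sign s13p0 : ℤ)) : ℝ) = 1 := by rw [show (Equiv.Perm.sign s13p0 : ℤ) = 1 from by decide]; norm_num
private lemma s13s1 : (((Equiv.Perm.sign s13p1 : ℤ)) : ℝ) = -1 := by rw [show (Equiv.Perm.sign s13p1 : ℤ) = -1 from by decide]; norm_num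
private lemma s13s2 : (((Equiv.Perm.sign s13p2 : ℤ)) : ℝ) = -1 := by rw [show (Equiv.Perm.sign s13p2 : ℤ) = -1 from by decide]; norm_num
private lemma s13s3 : (((Equiv.Perm.sign s13p3 : ℤ)) : ℝ) = 1 := by rw [show (Equiv.Perm.sign s13p3 : ℤ) = 1 from by decide]; norm_num
private lemma s13s4 : (((Equiv.Perm.sign s13p4 : ℤ)) : ℝ) = 1 := by rw [show (Equiv.Perm.sign s13p4 : ℤ) = 1 from by decide]; norm_num
private lemma s13s5 : (((Equiv.Perm.sign s13p5 : ℤ)) : ℝ) = -1 := by rw [show (Equiv.Perm.sign s13p5 : ℤ) = -1 from by decide]; norm_num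
private lemma s13s6 : (((Equiv.Perm.sign s13p6 : ℤ)) : ℝ) = -1 := by rw [show (Equiv.Perm.sign s13p6 : ℤ) = -1 from by decide]; norm_num
private lemma s13s7 : (((Equiv.Perm.sign s13p7 : ℤ)) : ℝ) = 1 := by rw [show (Equiv.Perm.sign s13p7 : ℤ) = 1 from by decide]; norm_num
private lemma s13s8 : (((Equiv.Perm.sign s13p8 : ℤ)) : ℝ) = 1 := by rw [show (Equiv.Perm.sign s13p8 : ℤ) = 1 from by decide]; norm_num
private lemma s13s9 : (((Equiv.Perm.sign s13p9 : ℤ)) : ℝ) = -1 := by rw [show (Equiv.Perm.sign s13p9 : ℤ) = -1 from by decide]; norm_num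
private lemma s13s10 : (((Equiv.Perm.sign s13p10 : ℤ)) : ℝ) = -1 := by rw [show (Equiv.Perm.sign s13p10 : ℤ) = -1 from by decide]; norm_num
private lemma s13s11 : (((Equiv.Perm.sign s13p11 : ℤ)) : ℝ) = 1 := by rw [show (Equiv.Perm.sign s13p11 : ℤ) = 1 from by decide]; norm_num
private lemma s13s12 : (((Equiv.Perm.sign s13p12 : ℤ)) : ℝ) = 1 := by rw [show (Equiv.Perm.sign s13p12 : ℤ) = 1 from by decide]; norm_num
private lemma s13s13 : (((Equiv.Perm.sign s13p13 : ℤ)) : ℝ) = -1 := by rw [show (Equiv.Perm.sign s13p13 : ℤ) = -1 from by decide]; norm_num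
private lemma s13s14 : (((Equiv.Perm.sign s13p14 : ℤ)) : ℝ) = -1 := by rw [show (Equiv.Perm.sign s13p14 : ℤ) = -1 from by decide]; norm_num
private lemma s13s15 : (((Equiv.Perm.sign s13p15 : ℤ)) : ℝ) = 1 := by rw [show (Equiv.Perm.sign s13p15 : ℤ) = 1 from by decide]; norm_num
private lemma s13s16 : (((Equiv.Perm.sign s13p16 : ℤ)) : ℝ) = 1 := by rw [show (Equiv.Perm.sign s13p16 : ℤ) = 1 from by decide]; norm_num
private lemma s13s17 : (((Equiv.Perm.sign s13p17 : ℤ)) : ℝ) = -1 := by rw [show (Equiv.Perm.sign s13p17 : ℤ) = -1 from by decide]; norm_num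
private lemma s13s18 : (((Equiv.Perm.sign s13p18 : ℤ)) : ℝ) = -1 := by rw [show (Equiv.Perm.sign s13p18 : ℤ) = -1 from by decide]; norm_num
private lemma s13s19 : (((Equiv.Perm.sign s13p19 : ℤ)) : ℝ) = 1 := by rw [show (Equiv.Perm.sign s13p19 : ℤ) = 1 from by decide]; norm_num
private lemma s13s20 : (((Equiv.Perm.sign s13p20 : ℤ)) : ℝ) = 1 := by rw [show (Equiv.Perm.sign s13p20 : ℤ) = 1 from by decide]; norm_num
private lemma s13s21 : (((Equiv.Perm.sign s13p21 : ℤ)) : ℝ) = -1 := by rw [show (Equiv.Perm.sign s13p21 : ℤ) = -1 from by decide]; norm_num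
private lemma s13s22 : (((Equiv.Perm.sign s13p22 : ℤ)) : ℝ) = -1 := by rw [show (Equiv.Perm.sign s13p22 : ℤ) = -1 from by decide]; norm_num
private lemma s13s23 : (((Equiv.Perm.sign s13p23 : ℤ)) : ℝ) = 1 := by rw [show (Equiv.Perm.sign s13p23 : ℤ) = 1 from by decide]; norm_num

private lemma s13univ : (Finset.univ : Finset (Equiv.Perm (Fin 4))) = {s13p0, s13p1, s13p2, s13p3, s13p4, s13p5, s13p6, s13p7, s13p8, s13p9, s13p10, s13p11, s13p12, s13p13, s13p14, s13p15, s13p16, s13p17, s13p18, s13p19, s13p20, s13p21, s13p22, s13p23} := by decide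

private lemma s13sum (f : Equiv.Perm (Fin 4) → ℝ) : (∑ σ : Equiv.Perm (Fin 4), f σ) = f s13p0 + f s13p1 + f s13p2 + f s13p3 + f s13p4 + f s13p5 + f s13p6 + f s13p7 + f s13p8 + f s13p9 + f s13p10 + f s13p11 + f s13p12 + f s13p13 + f s13p14 + f s13p15 + f s13p16 + f s13p17 + f s13p18 + f s13p19 + f s13p20 + f s13p21 + f s13p22 + f s13p23 := by
  rw [s13univ]
  rw [Finset.sum_insert (by decide), Finset.sum_insert (by decide), Finset.sum_insert (by decide), Finset.sum_insert (by decide), Finset.sum_insert (by decide), Finset.sum_insert (by decide), Finset.sum_insert (by decide), Finset.sum_insert (by decide), Finset.sum_insert (by decide), Finset.sum_insert (by decide), Finset.sum_insert (by decide), Finset.sum_insert (by decide), Finset.sum_insert (by decide), Finset.sum_insert (by decide), Finset.sum_insert (by decide), Finset.sum_insert (by decide), Finset.sum_insert (by decide), Finset.sum_insert (by decide), Finset.sum_insert (by decide), Finset.sum_insert (by decide), Finset.sum_insert (by decide), Finset.sum_insert (by decide), Finset.sum_insert (by decide), Finset.sum_singleton]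
  ring

private lemma s13f0 : (⟨0, by omega⟩ : Fin 4) = 0 := rfl
private lemma s13f1 : (⟨1, by omega⟩ : Fin 4) = 1 := rfl
private lemma s13f2 : (⟨2, by omega⟩ : Fin 4) = 2 := rfl
private lemma s13f3 : (⟨3, by omega⟩ : Fin 4) = 3 := rfl

private lemma s13sqz (x : ℝ) (h : x ^ 2 ≤ 0) : x = 0 :=
  sq_eq_zero_iff.mp (le_antisymm h (sq_nonneg x))

set_option maxHeartbeats 4000000 in
/-- Let W₁ be a nonzero trace-free algebraic curvature tensor on ℝ⁴ and
W := W₁ ⊕ 0 its extension to ℝ⁸ = ℝ⁴ ⊕ ℝ⁴ (vanishing whenever an index lies in the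
second factor). Then the fourth Weyl operator Ŵ₄ does not commute with the Hodge star:
Ŵ₄(*(e₁∧e₂∧e₃∧e₄)) = Ŵ₄(e₅∧e₆∧e₇∧e₈) = 0 (all its components against any 4-tuple
vanish), while *(Ŵ₄(e₁∧e₂∧e₃∧e₄)) ≠ 0 since some component of Ŵ₄(e₁∧e₂∧e₃∧e₄) is
nonzero (the Hodge star being injective, and sending e₁∧e₂∧e₃∧e₄ to e₅∧e₆∧e₇∧e₈). -/
theorem stmt_13 (W1 : Fin 4 → Fin 4 → Fin 4 → Fin 4 → ℝ) (hW1ne : W1 ≠ 0)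
    (ha1 : ∀ i j k l, W1 i j k l = -W1 j i k l)
    (ha2 : ∀ i j k l, W1 i j k l = -W1 i j l k)
    (hpair : ∀ i j k l, W1 i j k l = W1 k l i j)
    (hbianchi : ∀ i j k l, W1 i j k l + W1 j k i l + W1 k i j l = 0)
    (htracefree : ∀ j l, ∑ i, W1 i j i l = 0)
    (W : Fin 8 → Fin 8 → Fin 8 → Fin 8 → ℝ)
    (hW : ∀ i j k l, W i j k l =
      if h : i.val < 4 ∧ j.val < 4 ∧ k.val < 4 ∧ l.val < 4 then
        W1 ⟨i.val, h.1⟩ ⟨j.val, h.2.1⟩ ⟨k.val, h.2.2.1⟩ ⟨l.val, h.2.2.2⟩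
      else 0) :
    (∀ v : Fin 4 → Fin 8,
        weylFour W (fun k => ⟨k.val + 4, by have := k.isLt; omega⟩) v = 0) ∧
    (∃ v : Fin 4 → Fin 8,
        weylFour W (fun k => ⟨k.val, by have := k.isLt; omega⟩) v ≠ 0) := by
  constructor
  · intro v
    unfold weylFour
    refine mul_eq_zero_of_right _ (Finset.sum_eq_zero fun σ _ => Finset.sum_eq_zero fun τ _ => ?_)
    rw [hW, dif_neg (fun hc => by have h2 : (σ 0).val + 4 < 4 := hc.1; omega)]
    ring
  · refine ⟨(fun k => ⟨k.val, by have := k.isLt; omega⟩), ?_⟩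
    intro h0
    have E0000 : W1 0 0 0 0 = 0 := by linear_combination (ha1 0 0 0 0) / 2
    have E0001 : W1 0 0 0 1 = 0 := by linear_combination (ha1 0 0 0 1) / 2
    have E0002 : W1 0 0 0 2 = 0 := by linear_combination (ha1 0 0 0 2) / 2
    have E0003 : W1 0 0 0 3 = 0 := by linear_combination (ha1 0 0 0 3) / 2
    have E0010 : W1 0 0 1 0 = 0 := by linear_combination (ha1 0 0 1 0) / 2
    have E0011 : W1 0 0 1 1 = 0 := by linear_combination (ha1 0 0 1 1) / 2
    have E0012 : W1 0 0 1 2 = 0 := by linear_combination (ha1 0 0 1 2) / 2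
    have E0013 : W1 0 0 1 3 = 0 := by linear_combination (ha1 0 0 1 3) / 2
    have E0020 : W1 0 0 2 0 = 0 := by linear_combination (ha1 0 0 2 0) / 2
    have E0021 : W1 0 0 2 1 = 0 := by linear_combination (ha1 0 0 2 1) / 2
    have E0022 : W1 0 0 2 2 = 0 := by linear_combination (ha1 0 0 2 2) / 2
    have E0023 : W1 0 0 2 3 = 0 := by linear_combination (ha1 0 0 2 3) / 2
    have E0030 : W1 0 0 3 0 = 0 := by linear_combination (ha1 0 0 3 0) / 2
    have E0031 : W1 0 0 3 1 = 0 := by linear_combination (ha1 0 0 3 1) / 2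
    have E0032 : W1 0 0 3 2 = 0 := by linear_combination (ha1 0 0 3 2) / 2
    have E0033 : W1 0 0 3 3 = 0 := by linear_combination (ha1 0 0 3 3) / 2
    have E0100 : W1 0 1 0 0 = 0 := by linear_combination (ha2 0 1 0 0) / 2
    have E0110 : W1 0 1 1 0 = -W1 0 1 0 1 := by linear_combination (ha2 0 1 1 0)
    have E0111 : W1 0 1 1 1 = 0 := by linear_combination (ha2 0 1 1 1) / 2
    have E0120 : W1 0 1 2 0 = -W1 0 1 0 2 := by linear_combination (ha2 0 1 2 0)
    have E0121 : W1 0 1 2 1 = -W1 0 1 1 2 := by linear_combination (ha2 0 1 2 1)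
    have E0122 : W1 0 1 2 2 = 0 := by linear_combination (ha2 0 1 2 2) / 2
    have E0130 : W1 0 1 3 0 = -W1 0 1 0 3 := by linear_combination (ha2 0 1 3 0)
    have E0131 : W1 0 1 3 1 = -W1 0 1 1 3 := by linear_combination (ha2 0 1 3 1)
    have E0132 : W1 0 1 3 2 = -W1 0 1 2 3 := by linear_combination (ha2 0 1 3 2)
    have E0133 : W1 0 1 3 3 = 0 := by linear_combination (ha2 0 1 3 3) / 2
    have E0200 : W1 0 2 0 0 = 0 := by linear_combination (ha2 0 2 0 0) / 2
    have E0201 : W1 0 2 0 1 = W1 0 1 0 2 := by linear_combination (hpair 0 2 0 1)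
    have E0210 : W1 0 2 1 0 = -W1 0 1 0 2 := by linear_combination (ha2 0 2 1 0) - (hpair 0 2 0 1)
    have E0211 : W1 0 2 1 1 = 0 := by linear_combination (ha2 0 2 1 1) / 2
    have E0220 : W1 0 2 2 0 = -W1 0 2 0 2 := by linear_combination (ha2 0 2 2 0)
    have E0221 : W1 0 2 2 1 = -W1 0 2 1 2 := by linear_combination (ha2 0 2 2 1)
    have E0222 : W1 0 2 2 2 = 0 := by linear_combination (ha2 0 2 2 2) / 2
    have E0230 : W1 0 2 3 0 = -W1 0 2 0 3 := by linear_combination (ha2 0 2 3 0)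
    have E0231 : W1 0 2 3 1 = -W1 0 2 1 3 := by linear_combination (ha2 0 2 3 1)
    have E0232 : W1 0 2 3 2 = -W1 0 2 2 3 := by linear_combination (ha2 0 2 3 2)
    have E0233 : W1 0 2 3 3 = 0 := by linear_combination (ha2 0 2 3 3) / 2
    have E0300 : W1 0 3 0 0 = 0 := by linear_combination (ha2 0 3 0 0) / 2
    have E0301 : W1 0 3 0 1 = W1 0 1 0 3 := by linear_combination (hpair 0 3 0 1)
    have E0302 : W1 0 3 0 2 = W1 0 2 0 3 := by linear_combination (hpair 0 3 0 2)
    have E0310 : W1 0 3 1 0 = -W1 0 1 0 3 := by linear_combination (ha2 0 3 1 0) - (hpair 0 3 0 1)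
    have E0311 : W1 0 3 1 1 = 0 := by linear_combination (ha2 0 3 1 1) / 2
    have E0320 : W1 0 3 2 0 = -W1 0 2 0 3 := by linear_combination (ha2 0 3 2 0) - (hpair 0 3 0 2)
    have E0321 : W1 0 3 2 1 = -W1 0 3 1 2 := by linear_combination (ha2 0 3 2 1)
    have E0322 : W1 0 3 2 2 = 0 := by linear_combination (ha2 0 3 2 2) / 2
    have E0330 : W1 0 3 3 0 = -W1 0 3 0 3 := by linear_combination (ha2 0 3 3 0)
    have E0331 : W1 0 3 3 1 = -W1 0 3 1 3 := by linear_combination (ha2 0 3 3 1)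
    have E0332 : W1 0 3 3 2 = -W1 0 3 2 3 := by linear_combination (ha2 0 3 3 2)
    have E0333 : W1 0 3 3 3 = 0 := by linear_combination (ha2 0 3 3 3) / 2
    have E1000 : W1 1 0 0 0 = 0 := by linear_combination (ha2 1 0 0 0) / 2
    have E1001 : W1 1 0 0 1 = -W1 0 1 0 1 := by linear_combination (ha1 1 0 0 1)
    have E1002 : W1 1 0 0 2 = -W1 0 1 0 2 := by linear_combination (ha1 1 0 0 2)
    have E1003 : W1 1 0 0 3 = -W1 0 1 0 3 := by linear_combination (ha1 1 0 0 3)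
    have E1010 : W1 1 0 1 0 = W1 0 1 0 1 := by linear_combination (ha1 1 0 1 0) - (ha2 0 1 1 0)
    have E1011 : W1 1 0 1 1 = 0 := by linear_combination (ha2 1 0 1 1) / 2
    have E1012 : W1 1 0 1 2 = -W1 0 1 1 2 := by linear_combination (ha1 1 0 1 2)
    have E1013 : W1 1 0 1 3 = -W1 0 1 1 3 := by linear_combination (ha1 1 0 1 3)
    have E1020 : W1 1 0 2 0 = W1 0 1 0 2 := by linear_combination (ha1 1 0 2 0) - (ha2 0 1 2 0)
    have E1021 : W1 1 0 2 1 = W1 0 1 1 2 := by linear_combination (ha1 1 0 2 1) - (ha2 0 1 2 1)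
    have E1022 : W1 1 0 2 2 = 0 := by linear_combination (ha2 1 0 2 2) / 2
    have E1023 : W1 1 0 2 3 = -W1 0 1 2 3 := by linear_combination (ha1 1 0 2 3)
    have E1030 : W1 1 0 3 0 = W1 0 1 0 3 := by linear_combination (ha1 1 0 3 0) - (ha2 0 1 3 0)
    have E1031 : W1 1 0 3 1 = W1 0 1 1 3 := by linear_combination (ha1 1 0 3 1) - (ha2 0 1 3 1)
    have E1032 : W1 1 0 3 2 = W1 0 1 2 3 := by linear_combination (ha1 1 0 3 2) - (ha2 0 1 3 2)
    have E1033 : W1 1 0 3 3 = 0 := by linear_combination (ha2 1 0 3 3) / 2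
    have E1100 : W1 1 1 0 0 = 0 := by linear_combination (ha1 1 1 0 0) / 2
    have E1101 : W1 1 1 0 1 = 0 := by linear_combination (ha1 1 1 0 1) / 2
    have E1102 : W1 1 1 0 2 = 0 := by linear_combination (ha1 1 1 0 2) / 2
    have E1103 : W1 1 1 0 3 = 0 := by linear_combination (ha1 1 1 0 3) / 2
    have E1110 : W1 1 1 1 0 = 0 := by linear_combination (ha1 1 1 1 0) / 2
    have E1111 : W1 1 1 1 1 = 0 := by linear_combination (ha1 1 1 1 1) / 2
    have E1112 : W1 1 1 1 2 = 0 := by linear_combination (ha1 1 1 1 2) / 2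
    have E1113 : W1 1 1 1 3 = 0 := by linear_combination (ha1 1 1 1 3) / 2
    have E1120 : W1 1 1 2 0 = 0 := by linear_combination (ha1 1 1 2 0) / 2
    have E1121 : W1 1 1 2 1 = 0 := by linear_combination (ha1 1 1 2 1) / 2
    have E1122 : W1 1 1 2 2 = 0 := by linear_combination (ha1 1 1 2 2) / 2
    have E1123 : W1 1 1 2 3 = 0 := by linear_combination (ha1 1 1 2 3) / 2
    have E1130 : W1 1 1 3 0 = 0 := by linear_combination (ha1 1 1 3 0) / 2
    have E1131 : W1 1 1 3 1 = 0 := by linear_combination (ha1 1 1 3 1) / 2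
    have E1132 : W1 1 1 3 2 = 0 := by linear_combination (ha1 1 1 3 2) / 2
    have E1133 : W1 1 1 3 3 = 0 := by linear_combination (ha1 1 1 3 3) / 2
    have E1200 : W1 1 2 0 0 = 0 := by linear_combination (ha2 1 2 0 0) / 2
    have E1201 : W1 1 2 0 1 = W1 0 1 1 2 := by linear_combination (hpair 1 2 0 1)
    have E1202 : W1 1 2 0 2 = W1 0 2 1 2 := by linear_combination (hpair 1 2 0 2)
    have E1203 : W1 1 2 0 3 = W1 0 3 1 2 := by linear_combination (hpair 1 2 0 3)
    have E1210 : W1 1 2 1 0 = -W1 0 1 1 2 := by linear_combination (ha2 1 2 1 0) - (hpair 1 2 0 1)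
    have E1211 : W1 1 2 1 1 = 0 := by linear_combination (ha2 1 2 1 1) / 2
    have E1213 : W1 1 2 1 3 = W1 1 3 1 2 := by linear_combination (hpair 1 2 1 3)
    have E1220 : W1 1 2 2 0 = -W1 0 2 1 2 := by linear_combination (ha2 1 2 2 0) - (hpair 1 2 0 2)
    have E1221 : W1 1 2 2 1 = -W1 1 2 1 2 := by linear_combination (ha2 1 2 2 1)
    have E1222 : W1 1 2 2 2 = 0 := by linear_combination (ha2 1 2 2 2) / 2
    have E1223 : W1 1 2 2 3 = W1 2 3 1 2 := by linear_combination (hpair 1 2 2 3)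
    have E1230 : W1 1 2 3 0 = -W1 0 3 1 2 := by linear_combination (ha2 1 2 3 0) - (hpair 1 2 0 3)
    have E1231 : W1 1 2 3 1 = -W1 1 3 1 2 := by linear_combination (ha2 1 2 3 1) - (hpair 1 2 1 3)
    have E1232 : W1 1 2 3 2 = -W1 2 3 1 2 := by linear_combination (ha2 1 2 3 2) - (hpair 1 2 2 3)
    have E1233 : W1 1 2 3 3 = 0 := by linear_combination (ha2 1 2 3 3) / 2
    have E1300 : W1 1 3 0 0 = 0 := by linear_combination (ha2 1 3 0 0) / 2
    have E1301 : W1 1 3 0 1 = W1 0 1 1 3 := by linear_combination (hpair 1 3 0 1)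
    have E1302 : W1 1 3 0 2 = W1 0 2 1 3 := by linear_combination (hpair 1 3 0 2)
    have E1303 : W1 1 3 0 3 = W1 0 3 1 3 := by linear_combination (hpair 1 3 0 3)
    have E1310 : W1 1 3 1 0 = -W1 0 1 1 3 := by linear_combination (ha2 1 3 1 0) - (hpair 1 3 0 1)
    have E1311 : W1 1 3 1 1 = 0 := by linear_combination (ha2 1 3 1 1) / 2
    have E1320 : W1 1 3 2 0 = -W1 0 2 1 3 := by linear_combination (ha2 1 3 2 0) - (hpair 1 3 0 2)
    have E1321 : W1 1 3 2 1 = -W1 1 3 1 2 := by linear_combination (ha2 1 3 2 1)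
    have E1322 : W1 1 3 2 2 = 0 := by linear_combination (ha2 1 3 2 2) / 2
    have E1323 : W1 1 3 2 3 = W1 2 3 1 3 := by linear_combination (hpair 1 3 2 3)
    have E1330 : W1 1 3 3 0 = -W1 0 3 1 3 := by linear_combination (ha2 1 3 3 0) - (hpair 1 3 0 3)
    have E1331 : W1 1 3 3 1 = -W1 1 3 1 3 := by linear_combination (ha2 1 3 3 1)
    have E1332 : W1 1 3 3 2 = -W1 2 3 1 3 := by linear_combination (ha2 1 3 3 2) - (hpair 1 3 2 3)
    have E1333 : W1 1 3 3 3 = 0 := by linear_combination (ha2 1 3 3 3) / 2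
    have E2000 : W1 2 0 0 0 = 0 := by linear_combination (ha2 2 0 0 0) / 2
    have E2001 : W1 2 0 0 1 = -W1 0 1 0 2 := by linear_combination (ha1 2 0 0 1) - (hpair 0 2 0 1)
    have E2002 : W1 2 0 0 2 = -W1 0 2 0 2 := by linear_combination (ha1 2 0 0 2)
    have E2003 : W1 2 0 0 3 = -W1 0 2 0 3 := by linear_combination (ha1 2 0 0 3)
    have E2010 : W1 2 0 1 0 = W1 0 1 0 2 := by linear_combination (ha1 2 0 1 0) - (ha2 0 2 1 0) + (hpair 0 2 0 1)
    have E2011 : W1 2 0 1 1 = 0 := by linear_combination (ha2 2 0 1 1) / 2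
    have E2012 : W1 2 0 1 2 = -W1 0 2 1 2 := by linear_combination (ha1 2 0 1 2)
    have E2013 : W1 2 0 1 3 = -W1 0 2 1 3 := by linear_combination (ha1 2 0 1 3)
    have E2020 : W1 2 0 2 0 = W1 0 2 0 2 := by linear_combination (ha1 2 0 2 0) - (ha2 0 2 2 0)
    have E2021 : W1 2 0 2 1 = W1 0 2 1 2 := by linear_combination (ha1 2 0 2 1) - (ha2 0 2 2 1)
    have E2022 : W1 2 0 2 2 = 0 := by linear_combination (ha2 2 0 2 2) / 2
    have E2023 : W1 2 0 2 3 = -W1 0 2 2 3 := by linear_combination (ha1 2 0 2 3)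
    have E2030 : W1 2 0 3 0 = W1 0 2 0 3 := by linear_combination (ha1 2 0 3 0) - (ha2 0 2 3 0)
    have E2031 : W1 2 0 3 1 = W1 0 2 1 3 := by linear_combination (ha1 2 0 3 1) - (ha2 0 2 3 1)
    have E2032 : W1 2 0 3 2 = W1 0 2 2 3 := by linear_combination (ha1 2 0 3 2) - (ha2 0 2 3 2)
    have E2033 : W1 2 0 3 3 = 0 := by linear_combination (ha2 2 0 3 3) / 2
    have E2100 : W1 2 1 0 0 = 0 := by linear_combination (ha2 2 1 0 0) / 2
    have E2101 : W1 2 1 0 1 = -W1 0 1 1 2 := by linear_combination (ha1 2 1 0 1) - (hpair 1 2 0 1)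
    have E2102 : W1 2 1 0 2 = -W1 0 2 1 2 := by linear_combination (ha1 2 1 0 2) - (hpair 1 2 0 2)
    have E2103 : W1 2 1 0 3 = -W1 0 3 1 2 := by linear_combination (ha1 2 1 0 3) - (hpair 1 2 0 3)
    have E2110 : W1 2 1 1 0 = W1 0 1 1 2 := by linear_combination (ha1 2 1 1 0) - (ha2 1 2 1 0) + (hpair 1 2 0 1)
    have E2111 : W1 2 1 1 1 = 0 := by linear_combination (ha2 2 1 1 1) / 2
    have E2112 : W1 2 1 1 2 = -W1 1 2 1 2 := by linear_combination (ha1 2 1 1 2)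
    have E2113 : W1 2 1 1 3 = -W1 1 3 1 2 := by linear_combination (ha1 2 1 1 3) - (hpair 1 2 1 3)
    have E2120 : W1 2 1 2 0 = W1 0 2 1 2 := by linear_combination (ha1 2 1 2 0) - (ha2 1 2 2 0) + (hpair 1 2 0 2)
    have E2121 : W1 2 1 2 1 = W1 1 2 1 2 := by linear_combination (ha1 2 1 2 1) - (ha2 1 2 2 1)
    have E2122 : W1 2 1 2 2 = 0 := by linear_combination (ha2 2 1 2 2) / 2
    have E2123 : W1 2 1 2 3 = -W1 2 3 1 2 := by linear_combination (ha1 2 1 2 3) - (hpair 1 2 2 3)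
    have E2130 : W1 2 1 3 0 = W1 0 3 1 2 := by linear_combination (ha1 2 1 3 0) - (ha2 1 2 3 0) + (hpair 1 2 0 3)
    have E2131 : W1 2 1 3 1 = W1 1 3 1 2 := by linear_combination (ha1 2 1 3 1) - (ha2 1 2 3 1) + (hpair 1 2 1 3)
    have E2132 : W1 2 1 3 2 = W1 2 3 1 2 := by linear_combination (ha1 2 1 3 2) - (ha2 1 2 3 2) + (hpair 1 2 2 3)
    have E2133 : W1 2 1 3 3 = 0 := by linear_combination (ha2 2 1 3 3) / 2
    have E2200 : W1 2 2 0 0 = 0 := by linear_combination (ha1 2 2 0 0) / 2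
    have E2201 : W1 2 2 0 1 = 0 := by linear_combination (ha1 2 2 0 1) / 2
    have E2202 : W1 2 2 0 2 = 0 := by linear_combination (ha1 2 2 0 2) / 2
    have E2203 : W1 2 2 0 3 = 0 := by linear_combination (ha1 2 2 0 3) / 2
    have E2210 : W1 2 2 1 0 = 0 := by linear_combination (ha1 2 2 1 0) / 2
    have E2211 : W1 2 2 1 1 = 0 := by linear_combination (ha1 2 2 1 1) / 2
    have E2212 : W1 2 2 1 2 = 0 := by linear_combination (ha1 2 2 1 2) / 2
    have E2213 : W1 2 2 1 3 = 0 := by linear_combination (ha1 2 2 1 3) / 2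
    have E2220 : W1 2 2 2 0 = 0 := by linear_combination (ha1 2 2 2 0) / 2
    have E2221 : W1 2 2 2 1 = 0 := by linear_combination (ha1 2 2 2 1) / 2
    have E2222 : W1 2 2 2 2 = 0 := by linear_combination (ha1 2 2 2 2) / 2
    have E2223 : W1 2 2 2 3 = 0 := by linear_combination (ha1 2 2 2 3) / 2
    have E2230 : W1 2 2 3 0 = 0 := by linear_combination (ha1 2 2 3 0) / 2
    have E2231 : W1 2 2 3 1 = 0 := by linear_combination (ha1 2 2 3 1) / 2
    have E2232 : W1 2 2 3 2 = 0 := by linear_combination (ha1 2 2 3 2) / 2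
    have E2233 : W1 2 2 3 3 = 0 := by linear_combination (ha1 2 2 3 3) / 2
    have E2300 : W1 2 3 0 0 = 0 := by linear_combination (ha2 2 3 0 0) / 2
    have E2301 : W1 2 3 0 1 = W1 0 1 2 3 := by linear_combination (hpair 2 3 0 1)
    have E2302 : W1 2 3 0 2 = W1 0 2 2 3 := by linear_combination (hpair 2 3 0 2)
    have E2303 : W1 2 3 0 3 = W1 0 3 2 3 := by linear_combination (hpair 2 3 0 3)
    have E2310 : W1 2 3 1 0 = -W1 0 1 2 3 := by linear_combination (ha2 2 3 1 0) - (hpair 2 3 0 1)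
    have E2311 : W1 2 3 1 1 = 0 := by linear_combination (ha2 2 3 1 1) / 2
    have E2320 : W1 2 3 2 0 = -W1 0 2 2 3 := by linear_combination (ha2 2 3 2 0) - (hpair 2 3 0 2)
    have E2321 : W1 2 3 2 1 = -W1 2 3 1 2 := by linear_combination (ha2 2 3 2 1)
    have E2322 : W1 2 3 2 2 = 0 := by linear_combination (ha2 2 3 2 2) / 2
    have E2330 : W1 2 3 3 0 = -W1 0 3 2 3 := by linear_combination (ha2 2 3 3 0) - (hpair 2 3 0 3)
    have E2331 : W1 2 3 3 1 = -W1 2 3 1 3 := by linear_combination (ha2 2 3 3 1)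
    have E2332 : W1 2 3 3 2 = -W1 2 3 2 3 := by linear_combination (ha2 2 3 3 2)
    have E2333 : W1 2 3 3 3 = 0 := by linear_combination (ha2 2 3 3 3) / 2
    have E3000 : W1 3 0 0 0 = 0 := by linear_combination (ha2 3 0 0 0) / 2
    have E3001 : W1 3 0 0 1 = -W1 0 1 0 3 := by linear_combination (ha1 3 0 0 1) - (hpair 0 3 0 1)
    have E3002 : W1 3 0 0 2 = -W1 0 2 0 3 := by linear_combination (ha1 3 0 0 2) - (hpair 0 3 0 2)
    have E3003 : W1 3 0 0 3 = -W1 0 3 0 3 := by linear_combination (ha1 3 0 0 3)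
    have E3010 : W1 3 0 1 0 = W1 0 1 0 3 := by linear_combination (ha1 3 0 1 0) - (ha2 0 3 1 0) + (hpair 0 3 0 1)
    have E3011 : W1 3 0 1 1 = 0 := by linear_combination (ha2 3 0 1 1) / 2
    have E3012 : W1 3 0 1 2 = -W1 0 3 1 2 := by linear_combination (ha1 3 0 1 2)
    have E3013 : W1 3 0 1 3 = -W1 0 3 1 3 := by linear_combination (ha1 3 0 1 3)
    have E3020 : W1 3 0 2 0 = W1 0 2 0 3 := by linear_combination (ha1 3 0 2 0) - (ha2 0 3 2 0) + (hpair 0 3 0 2)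
    have E3021 : W1 3 0 2 1 = W1 0 3 1 2 := by linear_combination (ha1 3 0 2 1) - (ha2 0 3 2 1)
    have E3022 : W1 3 0 2 2 = 0 := by linear_combination (ha2 3 0 2 2) / 2
    have E3023 : W1 3 0 2 3 = -W1 0 3 2 3 := by linear_combination (ha1 3 0 2 3)
    have E3030 : W1 3 0 3 0 = W1 0 3 0 3 := by linear_combination (ha1 3 0 3 0) - (ha2 0 3 3 0)
    have E3031 : W1 3 0 3 1 = W1 0 3 1 3 := by linear_combination (ha1 3 0 3 1) - (ha2 0 3 3 1)
    have E3032 : W1 3 0 3 2 = W1 0 3 2 3 := by linear_combination (ha1 3 0 3 2) - (ha2 0 3 3 2)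
    have E3033 : W1 3 0 3 3 = 0 := by linear_combination (ha2 3 0 3 3) / 2
    have E3100 : W1 3 1 0 0 = 0 := by linear_combination (ha2 3 1 0 0) / 2
    have E3101 : W1 3 1 0 1 = -W1 0 1 1 3 := by linear_combination (ha1 3 1 0 1) - (hpair 1 3 0 1)
    have E3102 : W1 3 1 0 2 = -W1 0 2 1 3 := by linear_combination (ha1 3 1 0 2) - (hpair 1 3 0 2)
    have E3103 : W1 3 1 0 3 = -W1 0 3 1 3 := by linear_combination (ha1 3 1 0 3) - (hpair 1 3 0 3)
    have E3110 : W1 3 1 1 0 = W1 0 1 1 3 := by linear_combination (ha1 3 1 1 0) - (ha2 1 3 1 0) + (hpair 1 3 0 1)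
    have E3111 : W1 3 1 1 1 = 0 := by linear_combination (ha2 3 1 1 1) / 2
    have E3112 : W1 3 1 1 2 = -W1 1 3 1 2 := by linear_combination (ha1 3 1 1 2)
    have E3113 : W1 3 1 1 3 = -W1 1 3 1 3 := by linear_combination (ha1 3 1 1 3)
    have E3120 : W1 3 1 2 0 = W1 0 2 1 3 := by linear_combination (ha1 3 1 2 0) - (ha2 1 3 2 0) + (hpair 1 3 0 2)
    have E3121 : W1 3 1 2 1 = W1 1 3 1 2 := by linear_combination (ha1 3 1 2 1) - (ha2 1 3 2 1)
    have E3122 : W1 3 1 2 2 = 0 := by linear_combination (ha2 3 1 2 2) / 2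
    have E3123 : W1 3 1 2 3 = -W1 2 3 1 3 := by linear_combination (ha1 3 1 2 3) - (hpair 1 3 2 3)
    have E3130 : W1 3 1 3 0 = W1 0 3 1 3 := by linear_combination (ha1 3 1 3 0) - (ha2 1 3 3 0) + (hpair 1 3 0 3)
    have E3131 : W1 3 1 3 1 = W1 1 3 1 3 := by linear_combination (ha1 3 1 3 1) - (ha2 1 3 3 1)
    have E3132 : W1 3 1 3 2 = W1 2 3 1 3 := by linear_combination (ha1 3 1 3 2) - (ha2 1 3 3 2) + (hpair 1 3 2 3)
    have E3133 : W1 3 1 3 3 = 0 := by linear_combination (ha2 3 1 3 3) / 2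
    have E3200 : W1 3 2 0 0 = 0 := by linear_combination (ha2 3 2 0 0) / 2
    have E3201 : W1 3 2 0 1 = -W1 0 1 2 3 := by linear_combination (ha1 3 2 0 1) - (hpair 2 3 0 1)
    have E3202 : W1 3 2 0 2 = -W1 0 2 2 3 := by linear_combination (ha1 3 2 0 2) - (hpair 2 3 0 2)
    have E3203 : W1 3 2 0 3 = -W1 0 3 2 3 := by linear_combination (ha1 3 2 0 3) - (hpair 2 3 0 3)
    have E3210 : W1 3 2 1 0 = W1 0 1 2 3 := by linear_combination (ha1 3 2 1 0) - (ha2 2 3 1 0) + (hpair 2 3 0 1)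
    have E3211 : W1 3 2 1 1 = 0 := by linear_combination (ha2 3 2 1 1) / 2
    have E3212 : W1 3 2 1 2 = -W1 2 3 1 2 := by linear_combination (ha1 3 2 1 2)
    have E3213 : W1 3 2 1 3 = -W1 2 3 1 3 := by linear_combination (ha1 3 2 1 3)
    have E3220 : W1 3 2 2 0 = W1 0 2 2 3 := by linear_combination (ha1 3 2 2 0) - (ha2 2 3 2 0) + (hpair 2 3 0 2)
    have E3221 : W1 3 2 2 1 = W1 2 3 1 2 := by linear_combination (ha1 3 2 2 1) - (ha2 2 3 2 1)
    have E3222 : W1 3 2 2 2 = 0 := by linear_combination (ha2 3 2 2 2) / 2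
    have E3223 : W1 3 2 2 3 = -W1 2 3 2 3 := by linear_combination (ha1 3 2 2 3)
    have E3230 : W1 3 2 3 0 = W1 0 3 2 3 := by linear_combination (ha1 3 2 3 0) - (ha2 2 3 3 0) + (hpair 2 3 0 3)
    have E3231 : W1 3 2 3 1 = W1 2 3 1 3 := by linear_combination (ha1 3 2 3 1) - (ha2 2 3 3 1)
    have E3232 : W1 3 2 3 2 = W1 2 3 2 3 := by linear_combination (ha1 3 2 3 2) - (ha2 2 3 3 2)
    have E3233 : W1 3 2 3 3 = 0 := by linear_combination (ha2 3 2 3 3) / 2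
    have E3300 : W1 3 3 0 0 = 0 := by linear_combination (ha1 3 3 0 0) / 2
    have E3301 : W1 3 3 0 1 = 0 := by linear_combination (ha1 3 3 0 1) / 2
    have E3302 : W1 3 3 0 2 = 0 := by linear_combination (ha1 3 3 0 2) / 2
    have E3303 : W1 3 3 0 3 = 0 := by linear_combination (ha1 3 3 0 3) / 2
    have E3310 : W1 3 3 1 0 = 0 := by linear_combination (ha1 3 3 1 0) / 2
    have E3311 : W1 3 3 1 1 = 0 := by linear_combination (ha1 3 3 1 1) / 2
    have E3312 : W1 3 3 1 2 = 0 := by linear_combination (ha1 3 3 1 2) / 2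
    have E3313 : W1 3 3 1 3 = 0 := by linear_combination (ha1 3 3 1 3) / 2
    have E3320 : W1 3 3 2 0 = 0 := by linear_combination (ha1 3 3 2 0) / 2
    have E3321 : W1 3 3 2 1 = 0 := by linear_combination (ha1 3 3 2 1) / 2
    have E3322 : W1 3 3 2 2 = 0 := by linear_combination (ha1 3 3 2 2) / 2
    have E3323 : W1 3 3 2 3 = 0 := by linear_combination (ha1 3 3 2 3) / 2
    have E3330 : W1 3 3 3 0 = 0 := by linear_combination (ha1 3 3 3 0) / 2
    have E3331 : W1 3 3 3 1 = 0 := by linear_combination (ha1 3 3 3 1) / 2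
    have E3332 : W1 3 3 3 2 = 0 := by linear_combination (ha1 3 3 3 2) / 2
    have E3333 : W1 3 3 3 3 = 0 := by linear_combination (ha1 3 3 3 3) / 2
    have t00 := htracefree 0 0
    have t11 := htracefree 1 1
    have t22 := htracefree 2 2
    have t33 := htracefree 3 3
    have t01 := htracefree 0 1
    have t02 := htracefree 0 2
    have t03 := htracefree 0 3
    have t12 := htracefree 1 2
    have t13 := htracefree 1 3
    have t23 := htracefree 2 3
    simp only [Fin.sum_univ_four] at t00 t11 t22 t33 t01 t02 t03 t12 t13 t23
    simp only [E0000, E0001, E0002, E0003, E0010, E0011, E0012, E0013, E0020, E0021, E0022, E0023, E0030, E0031, E0032, E0033, E0100, E0110, E0111, E0120, E0121, E0122, E0130, E0131, E0132, E0133, E0200, E0201, E0210, E0211, E0220, E0221, E0222, E0230, E0231, E0232, E0233, E0300, E0301, E0302, E0310, E0311, E0320, E0321, E0322, E0330, E0331, E0332, E0333, E1000, E1001, E1002, E1003, E1010, E1011, E1012, E1013, E1020, E1021, E1022, E1023, E1030, E1031, E1032, E1033, E1100, E1101, E1102, E1103, E1110, E1111, E1112, E1113, E1120, E1121, E1122,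 E1123, E1130, E1131, E1132, E1133, E1200, E1201, E1202, E1203, E1210, E1211, E1213, E1220, E1221, E1222, E1223, E1230, E1231, E1232, E1233, E1300, E1301, E1302, E1303, E1310, E1311, E1320, E1321, E1322, E1323, E1330, E1331, E1332, E1333, E2000, E2001, E2002, E2003, E2010, E2011, E2012, E2013, E2020, E2021, E2022, E2023, E2030, E2031, E2032, E2033, E2100, E2101, E2102, E2103, E2110, E2111, E2112, E2113, E2120, E2121, E2122, E2123, E2130, E2131, E2132, E2133, E2200, E2201, E2202, E2203, E2210, E2211, E2212, E2213, E2220, E2221, E2222, E2223, E2230, E2231, E2232, E2233, E2300, E2301, E2302, E2303, E2310, E2311, E2320, E2321, E2322, E2330, E2331, E2332, E2333, E3000, E3001, E3002, E3003, E3010, E3011, E3012, E3013, E3020, E3021, E3022, E3023, E3030, E3031, E3032, E3033, E3100, E3101, E3102, E3103, E3110, E3111, E3112, E3113, E3120, E3121, E3122, E3123, E3130, E3131, E3132, E3133, E3200, E3201, E3202, E3203, E3210, E3211, E3212, E3213, E3220, E3221, E3222, E3223, E3230, E3231, E3232, E3233, E3300, E3301, E3302, E3303, E3310, E3311, E3312,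 E3313, E3320, E3321, E3322, E3323, E3330, E3331, E3332, E3333, add_zero, zero_add] at t00 t11 t22 t33 t01 t02 t03 t12 t13 t23
    have R1 : W1 2 3 2 3 = W1 0 1 0 1 := by linarith only [t00, t11, t22, t33]
    have R2 : W1 1 3 1 3 = W1 0 2 0 2 := by linarith only [t00, t11, t22, t33]
    have R3 : W1 1 2 1 2 = W1 0 3 0 3 := by linarith only [t00, t11, t22, t33]
    have R4 : W1 0 3 0 3 = -W1 0 1 0 1 - W1 0 2 0 2 := by linarith only [t00]
    have R5 : W1 2 3 1 3 = -W1 0 1 0 2 := by linarith only [t12]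
    have R6 : W1 2 3 1 2 = W1 0 1 0 3 := by linarith only [t13]
    have R7 : W1 1 3 1 2 = -W1 0 2 0 3 := by linarith only [t23]
    have R8 : W1 0 2 1 2 = -W1 0 3 1 3 := by linarith only [t01]
    have R9 : W1 0 3 2 3 = W1 0 1 1 2 := by linarith only [t02]
    have R10 : W1 0 1 1 3 = -W1 0 2 2 3 := by linarith only [t03]
    have hWu : ∀ a b c d : Fin 4,
        W ⟨a.val, by have := a.isLt; omega⟩ ⟨b.val, by have := b.isLt; omega⟩
          ⟨c.val, by have := c.isLt; omega⟩ ⟨d.val, by have := d.isLt; omega⟩ = W1 a b c d := by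
      intro a b c d
      rw [hW, dif_pos ⟨a.isLt, b.isLt, c.isLt, d.isLt⟩]
    have key : weylFour W (fun k => ⟨k.val, by have := k.isLt; omega⟩)
        (fun k => ⟨k.val, by have := k.isLt; omega⟩) = (1/3 : ℝ) * ((W1 0 1 0 1)^2 + (W1 0 2 0 2)^2 + (W1 0 1 0 1 + W1 0 2 0 2)^2 + 2*(W1 0 1 0 2)^2 + 2*(W1 0 1 0 3)^2 + 2*(W1 0 2 0 3)^2 + (W1 0 1 2 3)^2 + (W1 0 2 1 3)^2 + (W1 0 3 1 2)^2 + 2*(W1 0 1 1 2)^2 + 2*(W1 0 2 2 3)^2 + 2*(W1 0 3 1 3)^2) := by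
      unfold weylFour
      simp only [hWu]
      rw [show ((Nat.factorial 4 : ℕ) : ℝ) = 24 by norm_num [show Nat.factorial 4 = 24 from rfl]]
      simp only [s13sum]
      simp only [s13p0e0, s13p0e1, s13p0e2, s13p0e3, s13p1e0, s13p1e1, s13p1e2, s13p1e3, s13p2e0, s13p2e1, s13p2e2, s13p2e3, s13p3e0, s13p3e1, s13p3e2, s13p3e3, s13p4e0, s13p4e1, s13p4e2, s13p4e3, s13p5e0, s13p5e1, s13p5e2, s13p5e3, s13p6e0, s13p6e1, s13p6e2, s13p6e3, s13p7e0, s13p7e1, s13p7e2, s13p7e3, s13p8e0, s13p8e1, s13p8e2, s13p8e3, s13p9e0, s13p9e1, s13p9e2, s13p9e3, s13p10e0, s13p10e1, s13p10e2, s13p10e3, s13p11e0, s13p11e1, s13p11e2, s13p11e3, s13p12e0, s13p12e1, s13p12e2, s13p12e3, s13p13e0, s13p13e1, s13p13e2, s13p13e3, s13p14e0, s13p14e1, s13p14e2, s13p14e3, s13p15e0, s13p15e1, s13p15e2, s13p15e3, s13p16e0, s13p16e1, s13p16e2, s13p16e3, s13p17e0, s13p17e1, s13p17e2, s13p17e3,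 s13p18e0, s13p18e1, s13p18e2, s13p18e3, s13p19e0, s13p19e1, s13p19e2, s13p19e3, s13p20e0, s13p20e1, s13p20e2, s13p20e3, s13p21e0, s13p21e1, s13p21e2, s13p21e3, s13p22e0, s13p22e1, s13p22e2, s13p22e3, s13p23e0, s13p23e1, s13p23e2, s13p23e3]
      push_cast
      simp only [s13s0, s13s1, s13s2, s13s3, s13s4, s13s5, s13s6, s13s7, s13s8, s13s9, s13s10, s13s11, s13s12, s13s13, s13s14, s13s15, s13s16, s13s17, s13s18, s13s19, s13s20, s13s21, s13s22, s13s23]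
      simp only [E0000, E0001, E0002, E0003, E0010, E0011, E0012, E0013, E0020, E0021, E0022, E0023, E0030, E0031, E0032, E0033, E0100, E0110, E0111, E0120, E0121, E0122, E0130, E0131, E0132, E0133, E0200, E0201, E0210, E0211, E0220, E0221, E0222, E0230, E0231, E0232, E0233, E0300, E0301, E0302, E0310, E0311, E0320, E0321, E0322, E0330, E0331, E0332, E0333, E1000, E1001, E1002, E1003, E1010, E1011, E1012, E1013, E1020, E1021, E1022, E1023, E1030, E1031, E1032, E1033, E1100, E1101, E1102, E1103, E1110, E1111, E1112, E1113, E1120, E1121, E1122, E1123, E1130, E1131, E1132, E1133, E1200, E1201, E1202, E1203, E1210, E1211, E1213, E1220, E1221, E1222, E1223, E1230, E1231, E1232, E1233, E1300, E1301, E1302, E1303, E1310, E1311, E1320, E1321, E1322, E1323, E1330, E1331, E1332, E1333, E2000, E2001, E2002, E2003, E2010, E2011, E2012, E2013, E2020, E2021, E2022, E2023, E2030, E2031, E2032, E2033, E2100, E2101, E2102, E2103, E2110, E2111, E2112, E2113, E2120, E2121, E2122, E2123, E2130, E2131, E2132, E2133, E2200, E2201, E2202, E2203, E2210, E2211, E2212,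 E2213, E2220, E2221, E2222, E2223, E2230, E2231, E2232, E2233, E2300, E2301, E2302, E2303, E2310, E2311, E2320, E2321, E2322, E2330, E2331, E2332, E2333, E3000, E3001, E3002, E3003, E3010, E3011, E3012, E3013, E3020, E3021, E3022, E3023, E3030, E3031, E3032, E3033, E3100, E3101, E3102, E3103, E3110, E3111, E3112, E3113, E3120, E3121, E3122, E3123, E3130, E3131, E3132, E3133, E3200, E3201, E3202, E3203, E3210, E3211, E3212, E3213, E3220, E3221, E3222, E3223, E3230, E3231, E3232, E3233, E3300, E3301, E3302, E3303, E3310, E3311, E3312, E3313, E3320, E3321, E3322, E3323, E3330, E3331, E3332, E3333]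
      simp only [R1, R2, R5, R6, R7, R8, R9, R10]
      simp only [R3]
      simp only [R4]
      ring
    rw [key] at h0
    have zaa : W1 0 1 0 1 = 0 := s13sqz _ (by linarith only [h0, sq_nonneg (W1 0 2 0 2), sq_nonneg (W1 0 1 0 1 + W1 0 2 0 2), sq_nonneg (W1 0 1 0 2), sq_nonneg (W1 0 1 0 3), sq_nonneg (W1 0 2 0 3), sq_nonneg (W1 0 1 2 3), sq_nonneg (W1 0 2 1 3), sq_nonneg (W1 0 3 1 2), sq_nonneg (W1 0 1 1 2), sq_nonneg (W1 0 2 2 3), sq_nonneg (W1 0 3 1 3)])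
    have zbb : W1 0 2 0 2 = 0 := s13sqz _ (by linarith only [h0, sq_nonneg (W1 0 1 0 1), sq_nonneg (W1 0 1 0 1 + W1 0 2 0 2), sq_nonneg (W1 0 1 0 2), sq_nonneg (W1 0 1 0 3), sq_nonneg (W1 0 2 0 3), sq_nonneg (W1 0 1 2 3), sq_nonneg (W1 0 2 1 3), sq_nonneg (W1 0 3 1 2), sq_nonneg (W1 0 1 1 2), sq_nonneg (W1 0 2 2 3), sq_nonneg (W1 0 3 1 3)])
    have zab : W1 0 1 0 2 = 0 := s13sqz _ (by linarith only [h0, sq_nonneg (W1 0 1 0 1), sq_nonneg (W1 0 2 0 2), sq_nonneg (W1 0 1 0 1 + W1 0 2 0 2), sq_nonneg (W1 0 1 0 3), sq_nonneg (W1 0 2 0 3), sq_nonneg (W1 0 1 2 3), sq_nonneg (W1 0 2 1 3), sq_nonneg (W1 0 3 1 2), sq_nonneg (W1 0 1 1 2), sq_nonneg (W1 0 2 2 3), sq_nonneg (W1 0 3 1 3)])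
    have zac : W1 0 1 0 3 = 0 := s13sqz _ (by linarith only [h0, sq_nonneg (W1 0 1 0 1), sq_nonneg (W1 0 2 0 2), sq_nonneg (W1 0 1 0 1 + W1 0 2 0 2), sq_nonneg (W1 0 1 0 2), sq_nonneg (W1 0 2 0 3), sq_nonneg (W1 0 1 2 3), sq_nonneg (W1 0 2 1 3), sq_nonneg (W1 0 3 1 2), sq_nonneg (W1 0 1 1 2), sq_nonneg (W1 0 2 2 3), sq_nonneg (W1 0 3 1 3)])
    have zbc : W1 0 2 0 3 = 0 := s13sqz _ (by linarith only [h0, sq_nonneg (W1 0 1 0 1), sq_nonneg (W1 0 2 0 2), sq_nonneg (W1 0 1 0 1 + W1 0 2 0 2), sq_nonneg (W1 0 1 0 2), sq_nonneg (W1 0 1 0 3), sq_nonneg (W1 0 1 2 3), sq_nonneg (W1 0 2 1 3), sq_nonneg (W1 0 3 1 2), sq_nonneg (W1 0 1 1 2), sq_nonneg (W1 0 2 2 3), sq_nonneg (W1 0 3 1 3)])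
    have zad : W1 0 1 2 3 = 0 := s13sqz _ (by linarith only [h0, sq_nonneg (W1 0 1 0 1), sq_nonneg (W1 0 2 0 2), sq_nonneg (W1 0 1 0 1 + W1 0 2 0 2), sq_nonneg (W1 0 1 0 2), sq_nonneg (W1 0 1 0 3), sq_nonneg (W1 0 2 0 3), sq_nonneg (W1 0 2 1 3), sq_nonneg (W1 0 3 1 2), sq_nonneg (W1 0 1 1 2), sq_nonneg (W1 0 2 2 3), sq_nonneg (W1 0 3 1 3)])
    have zbe : W1 0 2 1 3 = 0 := s13sqz _ (by linarith only [h0, sq_nonneg (W1 0 1 0 1), sq_nonneg (W1 0 2 0 2), sq_nonneg (W1 0 1 0 1 + W1 0 2 0 2), sq_nonneg (W1 0 1 0 2), sq_nonneg (W1 0 1 0 3), sq_nonneg (W1 0 2 0 3), sq_nonneg (W1 0 1 2 3), sq_nonneg (W1 0 3 1 2), sq_nonneg (W1 0 1 1 2), sq_nonneg (W1 0 2 2 3), sq_nonneg (W1 0 3 1 3)])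
    have zcf : W1 0 3 1 2 = 0 := s13sqz _ (by linarith only [h0, sq_nonneg (W1 0 1 0 1), sq_nonneg (W1 0 2 0 2), sq_nonneg (W1 0 1 0 1 + W1 0 2 0 2), sq_nonneg (W1 0 1 0 2), sq_nonneg (W1 0 1 0 3), sq_nonneg (W1 0 2 0 3), sq_nonneg (W1 0 1 2 3), sq_nonneg (W1 0 2 1 3), sq_nonneg (W1 0 1 1 2), sq_nonneg (W1 0 2 2 3), sq_nonneg (W1 0 3 1 3)])
    have zaf : W1 0 1 1 2 = 0 := s13sqz _ (by linarith only [h0, sq_nonneg (W1 0 1 0 1), sq_nonneg (W1 0 2 0 2), sq_nonneg (W1 0 1 0 1 + W1 0 2 0 2), sq_nonneg (W1 0 1 0 2), sq_nonneg (W1 0 1 0 3), sq_nonneg (W1 0 2 0 3), sq_nonneg (W1 0 1 2 3), sq_nonneg (W1 0 2 1 3), sq_nonneg (W1 0 3 1 2), sq_nonneg (W1 0 2 2 3), sq_nonneg (W1 0 3 1 3)])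
    have zbd : W1 0 2 2 3 = 0 := s13sqz _ (by linarith only [h0, sq_nonneg (W1 0 1 0 1), sq_nonneg (W1 0 2 0 2), sq_nonneg (W1 0 1 0 1 + W1 0 2 0 2), sq_nonneg (W1 0 1 0 2), sq_nonneg (W1 0 1 0 3), sq_nonneg (W1 0 2 0 3), sq_nonneg (W1 0 1 2 3), sq_nonneg (W1 0 2 1 3), sq_nonneg (W1 0 3 1 2), sq_nonneg (W1 0 1 1 2), sq_nonneg (W1 0 3 1 3)])
    have zce : W1 0 3 1 3 = 0 := s13sqz _ (by linarith only [h0, sq_nonneg (W1 0 1 0 1), sq_nonneg (W1 0 2 0 2), sq_nonneg (W1 0 1 0 1 + W1 0 2 0 2), sq_nonneg (W1 0 1 0 2), sq_nonneg (W1 0 1 0 3), sq_nonneg (W1 0 2 0 3), sq_nonneg (W1 0 1 2 3), sq_nonneg (W1 0 2 1 3), sq_nonneg (W1 0 3 1 2), sq_nonneg (W1 0 1 1 2), sq_nonneg (W1 0 2 2 3)])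
    have zcc : W1 0 3 0 3 = 0 := by rw [R4, zaa, zbb]; ring
    have zdd : W1 2 3 2 3 = 0 := by rw [R1]; exact zaa
    have zee : W1 1 3 1 3 = 0 := by rw [R2]; exact zbb
    have zff : W1 1 2 1 2 = 0 := by rw [R3]; exact zcc
    have zde : W1 2 3 1 3 = 0 := by simp only [R5, zab, neg_zero]
    have zdf : W1 2 3 1 2 = 0 := by rw [R6]; exact zac
    have zef : W1 1 3 1 2 = 0 := by simp only [R7, zbc, neg_zero]
    have zbf : W1 0 2 1 2 = 0 := by simp only [R8, zce, neg_zero]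
    have zcd : W1 0 3 2 3 = 0 := by rw [R9]; exact zaf
    have zae : W1 0 1 1 3 = 0 := by simp only [R10, zbd, neg_zero]
    refine hW1ne ?_
    funext i j k l
    fin_cases i <;> fin_cases j <;> fin_cases k <;> fin_cases l <;>
      simp only [s13f0, s13f1, s13f2, s13f3, E0000, E0001, E0002, E0003, E0010, E0011, E0012, E0013, E0020, E0021, E0022, E0023, E0030, E0031, E0032, E0033, E0100, E0110, E0111, E0120, E0121, E0122, E0130, E0131, E0132, E0133, E0200, E0201, E0210, E0211, E0220, E0221, E0222, E0230, E0231, E0232, E0233, E0300, E0301, E0302, E0310, E0311, E0320, E0321, E0322, E0330, E0331, E0332, E0333, E1000, E1001, E1002, E1003, E1010, E1011, E1012, E1013, E1020, E1021, E1022, E1023, E1030, E1031, E1032, E1033, E1100, E1101, E1102, E1103, E1110, E1111, E1112, E1113, E1120, E1121, E1122, E1123, E1130, E1131, E1132, E1133, E1200, E1201, E1202, E1203, E1210, E1211, E1213, E1220, E1221, E1222, E1223, E1230, E1231, E1232, E1233, E1300, E1301, E1302, E1303, E1310, E1311, E1320, E1321, E1322, E1323, E1330, E1331, E1332, E1333,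 E2000, E2001, E2002, E2003, E2010, E2011, E2012, E2013, E2020, E2021, E2022, E2023, E2030, E2031, E2032, E2033, E2100, E2101, E2102, E2103, E2110, E2111, E2112, E2113, E2120, E2121, E2122, E2123, E2130, E2131, E2132, E2133, E2200, E2201, E2202, E2203, E2210, E2211, E2212, E2213, E2220, E2221, E2222, E2223, E2230, E2231, E2232, E2233, E2300, E2301, E2302, E2303, E2310, E2311, E2320, E2321, E2322, E2330, E2331, E2332, E2333, E3000, E3001, E3002, E3003, E3010, E3011, E3012, E3013, E3020, E3021, E3022, E3023, E3030, E3031, E3032, E3033, E3100, E3101, E3102, E3103, E3110, E3111, E3112, E3113, E3120, E3121, E3122, E3123, E3130, E3131, E3132, E3133, E3200, E3201, E3202, E3203, E3210, E3211, E3212, E3213, E3220, E3221, E3222, E3223, E3230, E3231, E3232, E3233, E3300, E3301, E3302, E3303, E3310, E3311, E3312, E3313, E3320, E3321, E3322, E3323, E3330, E3331, E3332, E3333, zaa, zbb, zcc, zab, zac, zbc, zad, zbe, zcf, zaf, zbd, zce, zdd, zee, zff, zde, zdf, zef, zbf, zcd, zae, neg_zero, Pi.zero_apply, Fin.isValue]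
end

section
/- Let (M, g) be a Riemannian manifold, q ∈ M, and suppose there is an orthonormal basis {e₁,…,eₙ} of T_qM with Rm(eᵢ,eⱼ,eᵢ,eⱼ) = aᵢ + aⱼ for constants a₁,…,aₙ and Rm(eᵢ,eⱼ,eₖ,eₗ) = 0 whenever {i,j} ≠ {k,l}. Then the Ricci tensor at q satisfies Ric(eⱼ,eₖ) = −δⱼₖ((n−2)aⱼ + Σᵢ aᵢ), the scalar curvature equals −2(n−1)Σᵢ aᵢ, and the Schouten tensor P = (1/(n−2))(Ric − (scal/(2(n−1)))g) satisfies P(eⱼ,eₖ) = −aⱼ δⱼₖ. -/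
open Finset

/-- Suppose the curvature components R_{ijkl} = Rm(eᵢ,eⱼ,eₖ,eₗ) in an
orthonormal basis of T_qM satisfy R i j i j = aᵢ + aⱼ (i ≠ j) and vanish whenever
{i,j} ≠ {k,l}. With the convention Ric(x,y) = −Σᵢ Rm(eᵢ,x,eᵢ,y), the Ricci tensor,
scalar curvature, and Schouten tensor P = (1/(n−2))(Ric − (scal/(2(n−1)))g) are:
Ric(eⱼ,eₖ) = −δⱼₖ((n−2)aⱼ + Σᵢaᵢ), scal = −2(n−1)Σᵢaᵢ, P(eⱼ,eₖ) = −aⱼδⱼₖ. -/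
theorem stmt_15 (n : ℕ) (hn : 3 ≤ n)
    (R : Fin n → Fin n → Fin n → Fin n → ℝ) (a : Fin n → ℝ)
    (hanti : ∀ i j k l, R i j k l = -R j i k l)
    (hdiag : ∀ i j, i ≠ j → R i j i j = a i + a j)
    (hpure : ∀ i j k l, ({i, j} : Finset (Fin n)) ≠ ({k, l} : Finset (Fin n)) →
      R i j k l = 0)
    (Ric : Fin n → Fin n → ℝ) (hRic : ∀ j k, Ric j k = -∑ i, R i j i k)
    (scal : ℝ) (hscal : scal = ∑ j, Ric j j)
    (P : Fin n → Fin n → ℝ)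
    (hP : ∀ j k, P j k = (1 / ((n : ℝ) - 2)) *
      (Ric j k - scal / (2 * ((n : ℝ) - 1)) * (if j = k then 1 else 0))) :
    (∀ j k, Ric j k = -(if j = k then ((n : ℝ) - 2) * a j + ∑ i, a i else 0)) ∧
    scal = -2 * ((n : ℝ) - 1) * ∑ i, a i ∧
    (∀ j k, P j k = -(if j = k then a j else 0)) := by
  have hn2 : (n : ℝ) - 2 ≠ 0 := by
    have : (3 : ℝ) ≤ n := by exact_mod_cast hn
    linarith
  have hn1 : (n : ℝ) - 1 ≠ 0 := by
    have : (3 : ℝ) ≤ n := by exact_mod_cast hn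
    linarith
  have hRicc : ∀ j k, Ric j k = -(if j = k then ((n : ℝ) - 2) * a j + ∑ i, a i else 0) := by
    intro j k
    rw [hRic]
    by_cases h : j = k
    · subst h
      simp only [if_pos rfl]
      have hterm : ∀ i, R i j i j = (a i + a j) - (if i = j then a j + a j else 0) := by
        intro i
        by_cases hi : i = j
        · subst hi
          have := hanti i i i i
          simp [if_pos rfl]
          linarith
        · simp [hi, hdiag i j hi]
      rw [Finset.sum_congr rfl (fun i _ => hterm i), Finset.sum_sub_distrib,
        Finset.sum_add_distrib, Finset.sum_const, Finset.sum_ite_eq' Finset.univ j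
          (fun _ => a j + a j)]
      simp [Finset.card_univ]
      ring
    · simp only [if_neg h]
      rw [Finset.sum_eq_zero, neg_zero]
      intro i _
      apply hpure
      intro heq
      have hj : j ∈ ({i, k} : Finset (Fin n)) := by rw [← heq]; simp
      have hk : k ∈ ({i, j} : Finset (Fin n)) := by rw [heq]; simp
      simp at hj hk
      rcases hj with hj | hj
      · rcases hk with hk | hk
        · exact h (hj.trans hk.symm)
        · exact h hk.symm
      · exact h hj
  have hscal' : scal = -2 * ((n : ℝ) - 1) * ∑ i, a i := by
    rw [hscal, Finset.sum_congr rfl (fun j _ => hRicc j j)]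
    simp only [if_true]
    rw [Finset.sum_neg_distrib, Finset.sum_add_distrib, Finset.sum_const, ← Finset.mul_sum]
    simp [Finset.card_univ]
    ring
  refine ⟨hRicc, hscal', fun j k => ?_⟩
  rw [hP, hRicc, hscal']
  by_cases h : j = k
  · subst h
    simp only [if_pos rfl]
    field_simp
    simp only [↓reduceIte]
    ring
  · simp [h]
end
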